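/- arXiv:1807.11864 — 6 statements merged into one kernel-verified Lean document; each statement's English description precedes it below -/
import Mathlib

section
/- Let g : [0,1] × [0,1] → ℝ be a gross payoff function such that g₂(x,t) := ∂g(x,t)/∂t exists at every (x,t) ∈ [0,1]² and g₂ is bounded on [0,1]², and suppose preferences are strictly single-crossing, i.e. for each t ∈ [0,1] the map x ↦ g₂(x,t) is strictly increasing on [0,1]. Let (X,P) be a direct mechanism such that X : [0,1] → [0,1] is strictly increasing, the map s ↦ g₂(X(s),s) is Lebesgue integrable on [0,1], and the envelope formula holds: P(t) = P(0) − g(X(0),0) + g(X(t),t) − ∫₀ᵗ g₂(X(s),s) ds for all t ∈ [0,1]. Then (X,P) is strictly strategy-proof: g(X(t),t) − P(t) > g(X(r),t) − P(r) for all t,r ∈ [0,1] with r ≠ t. (Sufficiency direction of Proposition 1.) -/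
open MeasureTheory Set

private lemma aux_integrable (g g2 : ℝ → ℝ → ℝ) (x : ℝ) (hx : x ∈ Icc (0:ℝ) 1)
    (hderiv : ∀ t ∈ Icc (0:ℝ) 1, HasDerivWithinAt (fun s => g x s) (g2 x t) (Icc (0:ℝ) 1) t)
    (M : ℝ) (hM : ∀ t ∈ Icc (0:ℝ) 1, |g2 x t| ≤ M) :
    IntervalIntegrable (fun s => g2 x s) volume 0 1 := by
  rw [intervalIntegrable_iff_integrableOn_Ioc_of_le zero_le_one]
  have hres : volume.restrict (Ioc (0:ℝ) 1) = volume.restrict (Ioo (0:ℝ) 1) :=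
    (Measure.restrict_congr_set Ioo_ae_eq_Ioc).symm
  have h1 : ∀ s ∈ Ioo (0:ℝ) 1, deriv (fun u => g x u) s = g2 x s := by
    intro s hs
    exact ((hderiv s (Ioo_subset_Icc_self hs)).hasDerivAt (Icc_mem_nhds hs.1 hs.2)).deriv
  have hae : (fun s => deriv (fun u => g x u) s) =ᵐ[volume.restrict (Ioc (0:ℝ) 1)]
      (fun s => g2 x s) := by
    rw [hres]
    exact (ae_restrict_mem measurableSet_Ioo).mono fun s hs => h1 s hs
  have hmeas : AEStronglyMeasurable (fun s => g2 x s) (volume.restrict (Ioc (0:ℝ) 1)) :=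
    ((measurable_deriv (fun u => g x u)).aestronglyMeasurable).congr hae
  apply Integrable.mono' (integrable_const M) hmeas
  exact (ae_restrict_mem measurableSet_Ioc).mono fun s hs =>
    hM s ⟨le_of_lt hs.1, hs.2⟩

private lemma aux_ftc (g g2 : ℝ → ℝ → ℝ) (x : ℝ) (hx : x ∈ Icc (0:ℝ) 1)
    (hderiv : ∀ t ∈ Icc (0:ℝ) 1, HasDerivWithinAt (fun s => g x s) (g2 x t) (Icc (0:ℝ) 1) t)
    (M : ℝ) (hM : ∀ t ∈ Icc (0:ℝ) 1, |g2 x t| ≤ M)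
    (a b : ℝ) (ha : a ∈ Icc (0:ℝ) 1) (hb : b ∈ Icc (0:ℝ) 1) (hab : a ≤ b) :
    ∫ s in a..b, g2 x s = g x b - g x a := by
  have hsub : Icc a b ⊆ Icc (0:ℝ) 1 := Icc_subset_Icc ha.1 hb.2
  have hcont : ContinuousOn (fun s => g x s) (Icc a b) :=
    ContinuousOn.mono (fun t ht => (hderiv t ht).continuousWithinAt) hsub
  apply intervalIntegral.integral_eq_sub_of_hasDeriv_right_of_le hab hcont
  · intro s hs
    have hs01 : s ∈ Ioo (0:ℝ) 1 := ⟨lt_of_le_of_lt ha.1 hs.1, lt_of_lt_of_le hs.2 hb.2⟩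
    exact (((hderiv s (Ioo_subset_Icc_self hs01)).hasDerivAt
      (Icc_mem_nhds hs01.1 hs01.2))).hasDerivWithinAt
  · exact (aux_integrable g g2 x hx hderiv M hM).mono_set
      (uIcc_subset_uIcc (by simp [uIcc_of_le (zero_le_one' ℝ)]; exact ha)
        (by simp [uIcc_of_le (zero_le_one' ℝ)]; exact hb))

/-- Sufficiency direction of Proposition 1: strict monotonicity of the allocation
rule plus the envelope formula imply strict strategy-proofness. -/
theorem strict_mono_and_envelope_imp_strictly_strategy_proof
    (g g2 : ℝ → ℝ → ℝ) (X P : ℝ → ℝ)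
    (hX : ∀ t ∈ Icc (0:ℝ) 1, X t ∈ Icc (0:ℝ) 1)
    (hderiv : ∀ x ∈ Icc (0:ℝ) 1, ∀ t ∈ Icc (0:ℝ) 1,
      HasDerivWithinAt (fun s => g x s) (g2 x t) (Icc (0:ℝ) 1) t)
    (hbdd : ∃ M : ℝ, ∀ x ∈ Icc (0:ℝ) 1, ∀ t ∈ Icc (0:ℝ) 1, |g2 x t| ≤ M)
    (hscc : ∀ t ∈ Icc (0:ℝ) 1, StrictMonoOn (fun x => g2 x t) (Icc (0:ℝ) 1))
    (hXmono : StrictMonoOn X (Icc (0:ℝ) 1))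
    (hint : IntervalIntegrable (fun s => g2 (X s) s) volume 0 1)
    (henv : ∀ t ∈ Icc (0:ℝ) 1,
      P t = P 0 - g (X 0) 0 + g (X t) t - ∫ s in (0:ℝ)..t, g2 (X s) s) :
    ∀ t ∈ Icc (0:ℝ) 1, ∀ r ∈ Icc (0:ℝ) 1, r ≠ t →
      g (X t) t - P t > g (X r) t - P r := by
  obtain ⟨M, hM⟩ := hbdd
  intro t ht r hr hrt
  have hXr := hX r hr
  have hXint : ∀ a b : ℝ, a ∈ Icc (0:ℝ) 1 → b ∈ Icc (0:ℝ) 1 →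
      IntervalIntegrable (fun s => g2 (X s) s) volume a b := by
    intro a b ha hb
    exact hint.mono_set (uIcc_subset_uIcc (by simp [uIcc_of_le (zero_le_one' ℝ)]; exact ha)
      (by simp [uIcc_of_le (zero_le_one' ℝ)]; exact hb))
  have hxrint : IntervalIntegrable (fun s => g2 (X r) s) volume 0 1 :=
    aux_integrable g g2 (X r) hXr (hderiv (X r) hXr) M (hM (X r) hXr)
  have hxrint' : ∀ a b : ℝ, a ∈ Icc (0:ℝ) 1 → b ∈ Icc (0:ℝ) 1 →
      IntervalIntegrable (fun s => g2 (X r) s) volume a b := by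
    intro a b ha hb
    exact hxrint.mono_set (uIcc_subset_uIcc (by simp [uIcc_of_le (zero_le_one' ℝ)]; exact ha)
      (by simp [uIcc_of_le (zero_le_one' ℝ)]; exact hb))
  -- key identity: payoff difference equals ∫_r^t (g2 (X s) s - g2 (X r) s) ds
  have hPsub : P t - P r = g (X t) t - g (X r) r - ∫ s in r..t, g2 (X s) s := by
    rw [henv t ht, henv r hr]
    have hsplit : (∫ s in (0:ℝ)..t, g2 (X s) s) - ∫ s in (0:ℝ)..r, g2 (X s) s
        = ∫ s in r..t, g2 (X s) s := by
      rw [← intervalIntegral.integral_add_adjacent_intervals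
        (hXint 0 r (by simp) hr) (hXint r t hr ht)]
      ring
    linarith [hsplit]
  have hftc : ∫ s in r..t, g2 (X r) s = g (X r) t - g (X r) r := by
    rcases le_total r t with h | h
    · exact aux_ftc g g2 (X r) hXr (hderiv (X r) hXr) M (hM (X r) hXr) r t hr ht h
    · rw [intervalIntegral.integral_symm,
        aux_ftc g g2 (X r) hXr (hderiv (X r) hXr) M (hM (X r) hXr) t r ht hr h]
      ring
  have hkey : g (X t) t - P t - (g (X r) t - P r)
      = ∫ s in r..t, (g2 (X s) s - g2 (X r) s) := by
    rw [intervalIntegral.integral_sub (hXint r t hr ht) (hxrint' r t hr ht), hftc]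
    linarith [hPsub]
  have hpos : 0 < ∫ s in r..t, (g2 (X s) s - g2 (X r) s) := by
    rcases lt_or_gt_of_ne hrt with h | h
    · -- r < t
      apply intervalIntegral.intervalIntegral_pos_of_pos_on
        ((hXint r t hr ht).sub (hxrint' r t hr ht))
      · intro s hs
        have hs01 : s ∈ Icc (0:ℝ) 1 := ⟨le_trans hr.1 (le_of_lt hs.1),
          le_trans (le_of_lt hs.2) ht.2⟩
        have : X r < X s := hXmono hr hs01 hs.1
        have := hscc s hs01 hXr (hX s hs01) this
        simpa using sub_pos.mpr this
      · exact h
    · -- t < r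
      have h2 : 0 < ∫ s in t..r, (g2 (X r) s - g2 (X s) s) := by
        apply intervalIntegral.intervalIntegral_pos_of_pos_on
          ((hxrint' t r ht hr).sub (hXint t r ht hr))
        · intro s hs
          have hs01 : s ∈ Icc (0:ℝ) 1 := ⟨le_trans ht.1 (le_of_lt hs.1),
            le_trans (le_of_lt hs.2) hr.2⟩
          have : X s < X r := hXmono hs01 hr hs.2
          have := hscc s hs01 (hX s hs01) hXr this
          simpa using sub_pos.mpr this
        · exact h
      have e1 : (∫ s in r..t, (g2 (X s) s - g2 (X r) s))
          = -∫ s in t..r, (g2 (X s) s - g2 (X r) s) :=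
        intervalIntegral.integral_symm t r
      have e2 : (∫ s in t..r, (g2 (X s) s - g2 (X r) s))
          = (∫ s in t..r, g2 (X s) s) - ∫ s in t..r, g2 (X r) s :=
        intervalIntegral.integral_sub (hXint t r ht hr) (hxrint' t r ht hr)
      have e3 : (∫ s in t..r, (g2 (X r) s - g2 (X s) s))
          = (∫ s in t..r, g2 (X r) s) - ∫ s in t..r, g2 (X s) s :=
        intervalIntegral.integral_sub (hxrint' t r ht hr) (hXint t r ht hr)
      linarith
  linarith [hkey, hpos]
end

section
/- Let g : [0,1] × [0,1] → ℝ be a gross payoff function such that g₂(x,t) := ∂g(x,t)/∂t exists at every (x,t) ∈ [0,1]² and g₂ is bounded on [0,1]², and suppose preferences are strictly single-crossing, i.e. for each t ∈ [0,1] the map x ↦ g₂(x,t) is strictly increasing on [0,1]. Let (X,P) be a direct mechanism that is strictly strategy-proof, such that s ↦ g₂(X(s),s) is Lebesgue integrable on [0,1] and the envelope formula holds: P(t) = P(0) − g(X(0),0) + g(X(t),t) − ∫₀ᵗ g₂(X(s),s) ds for all t ∈ [0,1]. Then X is strictly increasing on [0,1]. (Necessity of strict monotonicity in Proposition 1.)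 -/
open MeasureTheory Set

/-- Necessity of strict monotonicity in Proposition 1: a strictly strategy-proof
mechanism satisfying the envelope formula has a strictly increasing allocation rule. -/
theorem strictly_strategy_proof_imp_strict_mono
    (g g2 : ℝ → ℝ → ℝ) (X P : ℝ → ℝ)
    (hX : ∀ t ∈ Icc (0:ℝ) 1, X t ∈ Icc (0:ℝ) 1)
    (hderiv : ∀ x ∈ Icc (0:ℝ) 1, ∀ t ∈ Icc (0:ℝ) 1,
      HasDerivWithinAt (fun s => g x s) (g2 x t) (Icc (0:ℝ) 1) t)
    (hbdd : ∃ M : ℝ, ∀ x ∈ Icc (0:ℝ) 1, ∀ t ∈ Icc (0:ℝ) 1, |g2 x t| ≤ M)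
    (hscc : ∀ t ∈ Icc (0:ℝ) 1, StrictMonoOn (fun x => g2 x t) (Icc (0:ℝ) 1))
    (hssp : ∀ t ∈ Icc (0:ℝ) 1, ∀ r ∈ Icc (0:ℝ) 1, r ≠ t →
      g (X t) t - P t > g (X r) t - P r)
    (hint : IntervalIntegrable (fun s => g2 (X s) s) volume 0 1)
    (henv : ∀ t ∈ Icc (0:ℝ) 1,
      P t = P 0 - g (X 0) 0 + g (X t) t - ∫ s in (0:ℝ)..t, g2 (X s) s) :
    StrictMonoOn X (Icc (0:ℝ) 1) := by
  intro a ha b hb hab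
  by_contra hle
  push_neg at hle  -- X b ≤ X a
  -- cross inequalities from strict strategy-proofness
  have h1 := hssp b hb a ha (ne_of_lt hab)
  have h2 := hssp a ha b hb (ne_of_gt hab)
  -- so g (X b) b - g (X b) a > g (X a) b - g (X a) a
  have hcross : g (X a) b - g (X b) b < g (X a) a - g (X b) a := by linarith
  -- φ t := g (X a) t - g (X b) t is monotone on [0,1]
  have hXa := hX a ha
  have hXb := hX b hb
  have hmono : MonotoneOn (fun t => g (X a) t - g (X b) t) (Icc (0:ℝ) 1) := by
    apply monotoneOn_of_hasDerivWithinAt_nonneg (f' := fun t => g2 (X a) t - g2 (X b) t)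
      (convex_Icc 0 1)
    · exact fun t ht => ((hderiv _ hXa t ht).sub (hderiv _ hXb t ht)).continuousWithinAt
    · intro t ht
      exact (((hderiv _ hXa t (interior_subset ht)).sub
        (hderiv _ hXb t (interior_subset ht)))).mono interior_subset
    · intro t ht
      have := (hscc t (interior_subset ht)).monotoneOn hXb hXa hle
      simpa using sub_nonneg.mpr this
  exact absurd (hmono ha hb hab.le) (not_le.mpr hcross)
end

section
/- Let g : [0,1] × [0,1] → ℝ be a gross payoff function such that g₂(x,t) := ∂g(x,t)/∂t exists at every (x,t) ∈ [0,1]², g₂ is bounded on [0,1]², and g₂ is Borel measurable on [0,1]². Let (X,P) be a direct mechanism with X : [0,1] → [0,1] and P : [0,1] → ℝ that is weakly strategy-proof: g(X(t),t) − P(t) ≥ g(X(r),t) − P(r) for all t,r ∈ [0,1]. Then the envelope formula holds: P(t) = P(0) − g(X(0),0) + g(X(t),t) − ∫₀ᵗ g₂(X(s),s) ds for all t ∈ [0,1]; equivalently, the indirect-utility function V(t) := g(X(t),t) − P(t) is Lipschitz and satisfies V(t) = V(0) + ∫₀ᵗ g₂(X(s),s) ds for all t ∈ [0,1]. (Application of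 the Milgrom–Segal envelope theorem used in the proofs of the Spence–Mirrlees lemma and Proposition 1.) -/
open MeasureTheory Set Filter Topology

lemma seq_slope_tendsto {f : ℝ → ℝ} {c L : ℝ} (hf : HasDerivAt f L c) :
    Tendsto (fun n : ℕ => (f (c + 1/(n+1)) - f c) / (1/(n+1:ℝ))) atTop (𝓝 L) := by
  have hslope := hasDerivAt_iff_tendsto_slope.mp hf
  have hseq : Tendsto (fun n : ℕ => c + 1/(n+1:ℝ)) atTop (𝓝[≠] c) := by
    apply tendsto_nhdsWithin_of_tendsto_nhds_of_eventually_within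
    · simpa using tendsto_const_nhds.add (tendsto_one_div_add_atTop_nhds_zero_nat : Tendsto (fun n : ℕ => 1 / ((n : ℝ) + 1)) atTop (𝓝 0))
    · filter_upwards with n
      have hp : (0:ℝ) < 1/(n+1) := by positivity
      simp only [mem_compl_iff, mem_singleton_iff]
      intro h
      nlinarith [hp]
  refine (hslope.comp hseq).congr fun n => ?_
  simp only [Function.comp_apply, slope_def_field, add_sub_cancel_left]

lemma lipschitz_ftc {K : NNReal} {W : ℝ → ℝ} (hW : LipschitzWith K W) (a b : ℝ) :
    W b - W a = ∫ t in a..b, deriv W t := by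
  have hWc : Continuous W := hW.continuous
  set h : ℕ → ℝ := fun n => 1/(n+1) with hh
  have hpos : ∀ n, 0 < h n := fun n => by positivity
  set Δ : ℕ → ℝ → ℝ := fun n t => (W (t + h n) - W t) / h n with hΔ
  have hint : ∀ (c d : ℝ), IntervalIntegrable W volume c d := fun c d =>
    hWc.intervalIntegrable c d
  have hcont' : ∀ n, Continuous (fun t => W (t + h n)) := fun n =>
    hWc.comp (continuous_id.add continuous_const)
  have step1 : ∀ n, (∫ t in a..b, Δ n t) =
      ((∫ t in b..(b + h n), W t) - ∫ t in a..(a + h n), W t) / h n := by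
    intro n
    have hint' : IntervalIntegrable (fun t => W (t + h n)) volume a b :=
      (hcont' n).intervalIntegrable a b
    have h1 : (∫ t in a..b, Δ n t)
        = ((∫ t in a..b, W (t + h n)) - ∫ t in a..b, W t) / h n := by
      simp only [hΔ]
      rw [intervalIntegral.integral_div, intervalIntegral.integral_sub hint' (hint a b)]
    rw [h1, intervalIntegral.integral_comp_add_right]
    congr 1
    have h2 : (∫ t in a..(a + h n), W t) + ∫ t in (a + h n)..(b + h n), W t
        = ∫ t in a..(b + h n), W t :=
      intervalIntegral.integral_add_adjacent_intervals (hint _ _) (hint _ _)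
    have h3 : (∫ t in a..b, W t) + ∫ t in b..(b + h n), W t
        = ∫ t in a..(b + h n), W t :=
      intervalIntegral.integral_add_adjacent_intervals (hint _ _) (hint _ _)
    linarith
  have avg : ∀ c : ℝ, Tendsto (fun n => (∫ t in c..(c + h n), W t) / h n) atTop (𝓝 (W c)) := by
    intro c
    have hF : HasDerivAt (fun u => ∫ x in c..u, W x) (W c) c :=
      (hWc.integral_hasStrictDerivAt c c).hasDerivAt
    refine (seq_slope_tendsto hF).congr fun n => ?_
    rw [intervalIntegral.integral_same, sub_zero]
  have rhs_lim : Tendsto (fun n => (((∫ t in b..(b + h n), W t)) - ∫ t in a..(a + h n), W t) / h n)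
      atTop (𝓝 (W b - W a)) := by
    have := (avg b).sub (avg a)
    simpa [sub_div] using this
  have lhs_lim : Tendsto (fun n => ∫ t in a..b, Δ n t) atTop (𝓝 (∫ t in a..b, deriv W t)) := by
    apply intervalIntegral.tendsto_integral_filter_of_dominated_convergence (fun _ => (K:ℝ))
    · filter_upwards with n
      exact (((hcont' n).sub hWc).div_const (h n)).aestronglyMeasurable
    · filter_upwards with n
      filter_upwards with t _
      have hd : dist (W (t + h n)) (W t) ≤ K * dist (t + h n) t := hW.dist_le_mul _ _
      rw [Real.dist_eq, Real.dist_eq] at hd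
      have habs : |t + h n - t| = h n := by
        rw [add_sub_cancel_left]; exact abs_of_pos (hpos n)
      rw [habs] at hd
      have hKh : |W (t + h n) - W t| / h n ≤ (K:ℝ) := by
        rw [div_le_iff₀ (hpos n)]; linarith
      calc ‖Δ n t‖ = |W (t + h n) - W t| / h n := by
            simp [hΔ, abs_div, abs_of_pos (hpos n)]
        _ ≤ (K:ℝ) := hKh
    · exact intervalIntegrable_const
    · filter_upwards [hW.ae_differentiableAt_of_real] with t ht _
      exact seq_slope_tendsto ht.hasDerivAt
  exact tendsto_nhds_unique rhs_lim (lhs_lim.congr step1)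

/-- Milgrom–Segal envelope theorem applied to a weakly strategy-proof mechanism:
the envelope formula holds; equivalently, the indirect utility
`V t = g (X t) t − P t` is Lipschitz on `[0,1]` and `V t = V 0 + ∫₀ᵗ g₂(X s, s) ds`. -/
theorem weakly_strategy_proof_imp_envelope
    (g g2 : ℝ → ℝ → ℝ) (X P : ℝ → ℝ)
    (hX : ∀ t ∈ Icc (0:ℝ) 1, X t ∈ Icc (0:ℝ) 1)
    (hderiv : ∀ x ∈ Icc (0:ℝ) 1, ∀ t ∈ Icc (0:ℝ) 1,
      HasDerivWithinAt (fun s => g x s) (g2 x t) (Icc (0:ℝ) 1) t)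
    (hbdd : ∃ M : ℝ, ∀ x ∈ Icc (0:ℝ) 1, ∀ t ∈ Icc (0:ℝ) 1, |g2 x t| ≤ M)
    (hmeas : Measurable (fun p : Icc (0:ℝ) 1 × Icc (0:ℝ) 1 => g2 p.1 p.2))
    (hwsp : ∀ t ∈ Icc (0:ℝ) 1, ∀ r ∈ Icc (0:ℝ) 1,
      g (X t) t - P t ≥ g (X r) t - P r) :
    (∀ t ∈ Icc (0:ℝ) 1,
      P t = P 0 - g (X 0) 0 + g (X t) t - ∫ s in (0:ℝ)..t, g2 (X s) s) ∧
    (∃ K : NNReal, LipschitzOnWith K (fun t => g (X t) t - P t) (Icc (0:ℝ) 1)) ∧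
    (∀ t ∈ Icc (0:ℝ) 1,
      g (X t) t - P t = (g (X 0) 0 - P 0) + ∫ s in (0:ℝ)..t, g2 (X s) s) := by
  obtain ⟨M0, hM0⟩ := hbdd
  set M : ℝ := max M0 0 with hMdef
  have hMnn : 0 ≤ M := le_max_right _ _
  have hM : ∀ x ∈ Icc (0:ℝ) 1, ∀ t ∈ Icc (0:ℝ) 1, |g2 x t| ≤ M :=
    fun x hx t ht => (hM0 x hx t ht).trans (le_max_left _ _)
  -- key strategy-proofness inequality
  have hkey : ∀ s ∈ Icc (0:ℝ) 1, ∀ t ∈ Icc (0:ℝ) 1,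
      g (X s) t - g (X s) s ≤ (g (X t) t - P t) - (g (X s) s - P s) := by
    intro s hs t ht
    have := hwsp t ht s hs
    linarith
  -- g is M-Lipschitz in its second variable
  have gLip : ∀ x ∈ Icc (0:ℝ) 1, ∀ s ∈ Icc (0:ℝ) 1, ∀ t ∈ Icc (0:ℝ) 1,
      |g x t - g x s| ≤ M * |t - s| := by
    intro x hx s hs t ht
    have := (convex_Icc (0:ℝ) 1).norm_image_sub_le_of_norm_hasDerivWithin_le
      (f := fun u => g x u) (f' := fun u => g2 x u) (C := M)
      (fun u hu => hderiv x hx u hu)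
      (fun u hu => by rw [Real.norm_eq_abs]; exact hM x hx u hu) hs ht
    simpa [Real.norm_eq_abs] using this
  -- V is Lipschitz with constant M
  set K : NNReal := ⟨M, hMnn⟩ with hKdef
  have hVlip : LipschitzOnWith K (fun t => g (X t) t - P t) (Icc (0:ℝ) 1) := by
    apply LipschitzOnWith.of_dist_le_mul
    intro t ht s hs
    rw [Real.dist_eq, Real.dist_eq]
    have h1 := hkey s hs t ht
    have h2 := hkey t ht s hs
    have b1 := abs_le.mp (gLip (X s) (hX s hs) s hs t ht)
    have b2 := abs_le.mp (gLip (X t) (hX t ht) t ht s hs)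
    have habs : |s - t| = |t - s| := abs_sub_comm s t
    rw [habs] at b2
    show |(g (X t) t - P t) - (g (X s) s - P s)| ≤ (K:ℝ) * |t - s|
    have hK : (K:ℝ) = M := rfl
    rw [hK, abs_le]
    constructor <;> linarith [b1.1, b1.2, b2.1, b2.2]
  -- extend V to a globally Lipschitz W
  obtain ⟨W, hWlip, hWeq⟩ := hVlip.extend_real
  have aed : ∀ᵐ s : ℝ ∂(volume), DifferentiableAt ℝ W s := hWlip.ae_differentiableAt_of_real
  -- a.e. identification of the derivative
  have derivs : ∀ᵐ s : ℝ, s ∈ Ioo (0:ℝ) 1 → deriv W s = g2 (X s) s := by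
    filter_upwards [aed] with s hdiff hs
    have hsI : s ∈ Icc (0:ℝ) 1 := Ioo_subset_Icc_self hs
    have hnb : Icc (0:ℝ) 1 ∈ 𝓝 s := Icc_mem_nhds hs.1 hs.2
    have hφ : HasDerivAt (fun u => g (X s) u) (g2 (X s) s) s :=
      (hderiv (X s) (hX s hsI) s hsI).hasDerivAt hnb
    have hψ : HasDerivAt (fun u => W u - g (X s) u) (deriv W s - g2 (X s) s) s :=
      hdiff.hasDerivAt.sub hφ
    have hmin : IsLocalMin (fun u => W u - g (X s) u) s := by
      filter_upwards [hnb] with t htI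
      have e1 : g (X t) t - P t = W t := hWeq htI
      have e2 : g (X s) s - P s = W s := hWeq hsI
      have := hkey s hsI t htI
      show W s - g (X s) s ≤ W t - g (X s) t
      linarith
    have := hmin.hasDerivAt_eq_zero hψ
    linarith
  -- main envelope identity
  have h0 : (0:ℝ) ∈ Icc (0:ℝ) 1 := ⟨le_refl _, zero_le_one⟩
  have e0 : g (X 0) 0 - P 0 = W 0 := hWeq h0
  have main : ∀ t ∈ Icc (0:ℝ) 1,
      g (X t) t - P t = (g (X 0) 0 - P 0) + ∫ s in (0:ℝ)..t, g2 (X s) s := by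
    intro t ht
    have et : g (X t) t - P t = W t := hWeq ht
    have hft := lipschitz_ftc hWlip 0 t
    have hcong : (∫ s in (0:ℝ)..t, deriv W s) = ∫ s in (0:ℝ)..t, g2 (X s) s := by
      apply intervalIntegral.integral_congr_ae
      have h1 : ∀ᵐ s : ℝ, s ∉ ({1} : Set ℝ) :=
        measure_eq_zero_iff_ae_notMem.mp (measure_singleton 1)
      filter_upwards [derivs, h1] with s hs hs1 hmem
      rw [uIoc_of_le ht.1] at hmem
      have hslt : s < 1 := lt_of_le_of_ne (hmem.2.trans ht.2) (by simpa using hs1)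
      exact hs ⟨hmem.1, hslt⟩
    linarith [hft, hcong, e0, et]
  refine ⟨fun t ht => by have := main t ht; linarith, ⟨K, hVlip⟩, main⟩
end

section
/- (Proposition 2: strictness is essentially for free.) There are n ≥ 1 agents. For each agent i, let gⁱ : [0,1] × [0,1] → ℝ satisfy: g₂ⁱ(x,t) := ∂gⁱ(x,t)/∂t exists at every (x,t) ∈ [0,1]², g₂ⁱ is bounded and Borel measurable on [0,1]², x ↦ g₂ⁱ(x,t) is strictly increasing on [0,1] for each t, gⁱ(·,t) is continuous on [0,1] for each t, and the family {g₂ⁱ(·,t)}_{t ∈ [0,1]} is equicontinuous. Call a direct mechanism (X,P) feasible iff Σᵢ Xⁱ(t) ≤ 1 for every type profile t ∈ [0,1]ⁿ. If (X,P) is a feasible, weakly strategy-proof direct mechanism, then for every ε > 0 there exists a feasible, strictly strategy-proof direct mechanism (X',P') that is uniformly ε-close to (X,P): |X'ⁱ(t) − Xⁱ(t)| ≤ ε and |P'ⁱ(t) − Pⁱ(t)| ≤ ε for every agent i and every type profile t ∈ [0,1]ⁿ. -/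
open MeasureTheory Set
open MeasureTheory Set

noncomputable def pclamp (s : ℝ) : ℝ := max 0 (min 1 s)
lemma pclamp_mem (s : ℝ) : pclamp s ∈ Icc (0:ℝ) 1 :=
  ⟨le_max_left _ _, max_le zero_le_one (min_le_left _ _)⟩
lemma pclamp_mono : Monotone pclamp :=
  fun _ _ h => max_le_max le_rfl (min_le_min le_rfl h)
lemma pclamp_eq {s : ℝ} (hs : s ∈ Icc (0:ℝ) 1) : pclamp s = s := by
  unfold pclamp; rw [min_eq_right hs.2, max_eq_right hs.1]

section OneDim
variable (g g2 : ℝ → ℝ → ℝ) (M : ℝ)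

lemma intOn
    (hmeas : Measurable (fun p : Icc (0:ℝ) 1 × Icc (0:ℝ) 1 => g2 p.1 p.2))
    (hM : ∀ x ∈ Icc (0:ℝ) 1, ∀ t ∈ Icc (0:ℝ) 1, |g2 x t| ≤ M)
    (Y : ℝ → ℝ) (hYm : Monotone Y) (hYr : ∀ s, Y s ∈ Icc (0:ℝ) 1) :
    IntegrableOn (fun s => g2 (Y s) s) (Icc (0:ℝ) 1) volume := by
  have hψm : Measurable (fun s : ℝ => g2 (Y s) (pclamp s)) := by
    have h1 : Measurable (fun s : ℝ => (⟨Y s, hYr s⟩ : Icc (0:ℝ) 1)) :=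
      (hYm.measurable).subtype_mk
    have h2 : Measurable (fun s : ℝ => (⟨pclamp s, pclamp_mem s⟩ : Icc (0:ℝ) 1)) :=
      (pclamp_mono.measurable).subtype_mk
    exact hmeas.comp (h1.prodMk h2)
  have hint : IntegrableOn (fun s : ℝ => g2 (Y s) (pclamp s)) (Icc (0:ℝ) 1) volume := by
    refine Integrable.mono' (g := fun _ => M) ?_ hψm.aestronglyMeasurable ?_
    · exact integrableOn_const measure_Icc_lt_top.ne
    · exact Filter.Eventually.of_forall fun s => hM _ (hYr s) _ (pclamp_mem s)
  exact hint.congr_fun (fun s hs => by simp only [pclamp_eq hs]) measurableSet_Icc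

lemma uIoc_sub {a b : ℝ} (ha : a ∈ Icc (0:ℝ) 1) (hb : b ∈ Icc (0:ℝ) 1) :
    Set.uIoc a b ⊆ Icc (0:ℝ) 1 := by
  intro x hx
  rw [Set.mem_uIoc] at hx
  rcases hx with ⟨h1, h2⟩ | ⟨h1, h2⟩
  · exact ⟨ha.1.trans h1.le, h2.trans hb.2⟩
  · exact ⟨hb.1.trans h1.le, h2.trans ha.2⟩

lemma intII
    (hmeas : Measurable (fun p : Icc (0:ℝ) 1 × Icc (0:ℝ) 1 => g2 p.1 p.2))
    (hM : ∀ x ∈ Icc (0:ℝ) 1, ∀ t ∈ Icc (0:ℝ) 1, |g2 x t| ≤ M)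
    (Y : ℝ → ℝ) (hYm : Monotone Y) (hYr : ∀ s, Y s ∈ Icc (0:ℝ) 1)
    {a b : ℝ} (ha : a ∈ Icc (0:ℝ) 1) (hb : b ∈ Icc (0:ℝ) 1) :
    IntervalIntegrable (fun s => g2 (Y s) s) volume a b :=
  intervalIntegrable_iff.2 ((intOn g2 M hmeas hM Y hYm hYr).mono_set (uIoc_sub ha hb))

lemma intIIc
    (hmeas : Measurable (fun p : Icc (0:ℝ) 1 × Icc (0:ℝ) 1 => g2 p.1 p.2))
    (hM : ∀ x ∈ Icc (0:ℝ) 1, ∀ t ∈ Icc (0:ℝ) 1, |g2 x t| ≤ M)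
    {c : ℝ} (hc : c ∈ Icc (0:ℝ) 1)
    {a b : ℝ} (ha : a ∈ Icc (0:ℝ) 1) (hb : b ∈ Icc (0:ℝ) 1) :
    IntervalIntegrable (fun s => g2 c s) volume a b :=
  intII g2 M hmeas hM (fun _ => c) monotone_const (fun _ => hc) ha hb

lemma ftc
    (hderiv : ∀ x ∈ Icc (0:ℝ) 1, ∀ t ∈ Icc (0:ℝ) 1,
      HasDerivWithinAt (fun s => g x s) (g2 x t) (Icc (0:ℝ) 1) t)
    (hmeas : Measurable (fun p : Icc (0:ℝ) 1 × Icc (0:ℝ) 1 => g2 p.1 p.2))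
    (hM : ∀ x ∈ Icc (0:ℝ) 1, ∀ t ∈ Icc (0:ℝ) 1, |g2 x t| ≤ M)
    {c : ℝ} (hc : c ∈ Icc (0:ℝ) 1)
    {a b : ℝ} (ha : a ∈ Icc (0:ℝ) 1) (hb : b ∈ Icc (0:ℝ) 1) :
    ∫ s in a..b, g2 c s = g c b - g c a := by
  have key : ∀ a b : ℝ, a ∈ Icc (0:ℝ) 1 → b ∈ Icc (0:ℝ) 1 → a ≤ b →
      ∫ s in a..b, g2 c s = g c b - g c a := by
    intro a b ha hb hab
    have hcont : ContinuousOn (fun s => g c s) (Icc (0:ℝ) 1) :=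
      fun t ht => (hderiv c hc t ht).continuousWithinAt
    refine intervalIntegral.integral_eq_sub_of_hasDeriv_right_of_le hab
      (hcont.mono (Icc_subset_Icc ha.1 hb.2)) (fun x hx => ?_)
      (intIIc g2 M hmeas hM hc ha hb)
    have hxI : x ∈ Icc (0:ℝ) 1 := ⟨ha.1.trans hx.1.le, hx.2.le.trans hb.2⟩
    have hx1 : x < 1 := lt_of_lt_of_le hx.2 hb.2
    refine (hderiv c hc x hxI).mono_of_mem_nhdsWithin ?_
    refine Filter.mem_of_superset (Ioc_mem_nhdsGT_of_mem ⟨le_refl x, hx1⟩) ?_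
    exact fun y hy => ⟨hxI.1.trans hy.1.le, hy.2⟩
  rcases le_total a b with h | h
  · exact key a b ha hb h
  · rw [intervalIntegral.integral_symm, key b a hb ha h]; ring

/-- weak IC plus strict single crossing implies monotonicity. -/
lemma xmonoOn
    (hderiv : ∀ x ∈ Icc (0:ℝ) 1, ∀ t ∈ Icc (0:ℝ) 1,
      HasDerivWithinAt (fun s => g x s) (g2 x t) (Icc (0:ℝ) 1) t)
    (hmeas : Measurable (fun p : Icc (0:ℝ) 1 × Icc (0:ℝ) 1 => g2 p.1 p.2))
    (hM : ∀ x ∈ Icc (0:ℝ) 1, ∀ t ∈ Icc (0:ℝ) 1, |g2 x t| ≤ M)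
    (hscc : ∀ t ∈ Icc (0:ℝ) 1, StrictMonoOn (fun x => g2 x t) (Icc (0:ℝ) 1))
    (x p : ℝ → ℝ) (hxr : ∀ s, x s ∈ Icc (0:ℝ) 1)
    (hIC : ∀ s ∈ Icc (0:ℝ) 1, ∀ r ∈ Icc (0:ℝ) 1, g (x r) s - p r ≤ g (x s) s - p s) :
    MonotoneOn x (Icc (0:ℝ) 1) := by
  intro r hr t ht hrt
  rcases eq_or_lt_of_le hrt with h | hlt
  · rw [h]
  by_contra hcon
  push_neg at hcon
  have h1 := hIC t ht r hr
  have h2 := hIC r hr t ht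
  have hkey : (0:ℝ) ≤ (g (x t) t - g (x t) r) - (g (x r) t - g (x r) r) := by linarith
  rw [← ftc g g2 M hderiv hmeas hM (hxr t) hr ht,
      ← ftc g g2 M hderiv hmeas hM (hxr r) hr ht] at hkey
  have hii1 := intIIc g2 M hmeas hM (hxr t) hr ht
  have hii2 := intIIc g2 M hmeas hM (hxr r) hr ht
  have hpos : 0 < ∫ s in r..t, (g2 (x r) s - g2 (x t) s) := by
    refine intervalIntegral.intervalIntegral_pos_of_pos_on (hii2.sub hii1) ?_ hlt
    intro s hs
    have hsI : s ∈ Icc (0:ℝ) 1 := ⟨hr.1.trans hs.1.le, hs.2.le.trans ht.2⟩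
    have := hscc s hsI (hxr t) (hxr r) hcon
    simpa using sub_pos.2 this
  rw [intervalIntegral.integral_sub hii2 hii1] at hpos
  linarith

set_option maxHeartbeats 2000000 in
lemma envelope
    (hderiv : ∀ x ∈ Icc (0:ℝ) 1, ∀ t ∈ Icc (0:ℝ) 1,
      HasDerivWithinAt (fun s => g x s) (g2 x t) (Icc (0:ℝ) 1) t)
    (hmeas : Measurable (fun p : Icc (0:ℝ) 1 × Icc (0:ℝ) 1 => g2 p.1 p.2))
    (hM : ∀ x ∈ Icc (0:ℝ) 1, ∀ t ∈ Icc (0:ℝ) 1, |g2 x t| ≤ M)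
    (hscc : ∀ t ∈ Icc (0:ℝ) 1, StrictMonoOn (fun x => g2 x t) (Icc (0:ℝ) 1))
    (hequi : ∀ ε > (0:ℝ), ∃ δ > (0:ℝ), ∀ x ∈ Icc (0:ℝ) 1, ∀ x' ∈ Icc (0:ℝ) 1,
      |x' - x| < δ → ∀ t ∈ Icc (0:ℝ) 1, |g2 x' t - g2 x t| < ε)
    (x p : ℝ → ℝ) (hxm : Monotone x) (hxr : ∀ s, x s ∈ Icc (0:ℝ) 1)
    (hIC : ∀ s ∈ Icc (0:ℝ) 1, ∀ r ∈ Icc (0:ℝ) 1, g (x r) s - p r ≤ g (x s) s - p s)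
    {a b : ℝ} (ha : a ∈ Icc (0:ℝ) 1) (hb : b ∈ Icc (0:ℝ) 1) (hab : a ≤ b) :
    (g (x b) b - p b) - (g (x a) a - p a) = ∫ s in a..b, g2 (x s) s := by
  have hM0 : (0:ℝ) ≤ M := le_trans (abs_nonneg _)
    (hM 0 ⟨le_refl 0, zero_le_one⟩ 0 ⟨le_refl 0, zero_le_one⟩)
  set U : ℝ → ℝ := fun s => g (x s) s - p s with hU
  set G : ℝ → ℝ := fun s => g2 (x s) s with hG
  set D : ℝ := (U b - U a) - ∫ s in a..b, G s with hD
  -- main estimate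
  have main : ∀ ε > (0:ℝ), |D| ≤ ε := by
    intro ε hε
    obtain ⟨δ, hδ, hδε⟩ := hequi ε hε
    have est : ∀ N : ℕ, 0 < N → |D| ≤ ε + 2 * M / δ / N := by
      intro N hN
      have hNR : (0:ℝ) < N := Nat.cast_pos.2 hN
      set h : ℝ := (b - a) / N with hh
      have hh0 : 0 ≤ h := div_nonneg (by linarith) hNR.le
      set s : ℕ → ℝ := fun k => a + k * h with hs
      have hs0 : s 0 = a := by simp [hs]
      have hsN : s N = b := by simp only [hs, hh]; field_simp <;> ring
      have hstep : ∀ k : ℕ, s k ≤ s (k + 1) := by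
        intro k; simp only [hs]; push_cast; nlinarith
      have hsmono : Monotone s := monotone_nat_of_le_succ hstep
      have hsmem : ∀ k : ℕ, k ≤ N → s k ∈ Icc (0:ℝ) 1 := by
        intro k hk
        constructor
        · have hkh : (0:ℝ) ≤ (k:ℝ) * h := mul_nonneg (Nat.cast_nonneg k) hh0
          have : a ≤ s k := by simp only [hs]; linarith
          linarith [ha.1]
        · have : s k ≤ s N := hsmono hk
          rw [hsN] at this; linarith [hb.2]
      have hii : ∀ k < N, IntervalIntegrable G volume (s k) (s (k+1)) := by
        intro k hk
        exact intII g2 M hmeas hM x hxm hxr (hsmem k hk.le) (hsmem (k+1) hk)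
      have hiiL : ∀ k < N, IntervalIntegrable (fun u => g2 (x (s k)) u) volume (s k) (s (k+1)) :=
        fun k hk => intIIc g2 M hmeas hM (hxr _) (hsmem k hk.le) (hsmem (k+1) hk)
      have hiiR : ∀ k < N, IntervalIntegrable (fun u => g2 (x (s (k+1))) u) volume (s k) (s (k+1)) :=
        fun k hk => intIIc g2 M hmeas hM (hxr _) (hsmem k hk.le) (hsmem (k+1) hk)
      have hUtel : (U b - U a) = ∑ k ∈ Finset.range N, (U (s (k+1)) - U (s k)) := by
        rw [Finset.sum_range_sub (fun k => U (s k)) N, hs0, hsN]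
      have hItel : (∫ u in a..b, G u) = ∑ k ∈ Finset.range N, ∫ u in s k..s (k+1), G u := by
        rw [intervalIntegral.sum_integral_adjacent_intervals hii, hs0, hsN]
      have key : ∀ k < N,
          |(U (s (k+1)) - U (s k)) - ∫ u in s k..s (k+1), G u|
            ≤ h * (ε + 2 * M / δ * (x (s (k+1)) - x (s k))) := by
        intro k hk
        have hk1 : s k ∈ Icc (0:ℝ) 1 := hsmem k hk.le
        have hk2 : s (k+1) ∈ Icc (0:ℝ) 1 := hsmem (k+1) hk
        have hkk : s k ≤ s (k+1) := hstep k
        have hx12 : x (s k) ≤ x (s (k+1)) := hxm hkk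
        set L : ℝ := ∫ u in s k..s (k+1), g2 (x (s k)) u with hLdef
        set R : ℝ := ∫ u in s k..s (k+1), g2 (x (s (k+1))) u with hRdef
        have hUL : L ≤ U (s (k+1)) - U (s k) := by
          have h1 := hIC (s (k+1)) hk2 (s k) hk1
          have hftc : L = g (x (s k)) (s (k+1)) - g (x (s k)) (s k) :=
            ftc g g2 M hderiv hmeas hM (hxr _) hk1 hk2
          simp only [hU]; linarith
        have hUR : U (s (k+1)) - U (s k) ≤ R := by
          have h1 := hIC (s k) hk1 (s (k+1)) hk2
          have hftc : R = g (x (s (k+1))) (s (k+1)) - g (x (s (k+1))) (s k) :=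
            ftc g g2 M hderiv hmeas hM (hxr _) hk1 hk2
          simp only [hU]; linarith
        have hGL : L ≤ ∫ u in s k..s (k+1), G u := by
          refine intervalIntegral.integral_mono_on hkk (hiiL k hk) (hii k hk) ?_
          intro u hu
          have huI : u ∈ Icc (0:ℝ) 1 := ⟨hk1.1.trans hu.1, hu.2.trans hk2.2⟩
          exact ((hscc u huI).monotoneOn) (hxr _) (hxr _) (hxm hu.1)
        have hGR : (∫ u in s k..s (k+1), G u) ≤ R := by
          refine intervalIntegral.integral_mono_on hkk (hii k hk) (hiiR k hk) ?_
          intro u hu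
          have huI : u ∈ Icc (0:ℝ) 1 := ⟨hk1.1.trans hu.1, hu.2.trans hk2.2⟩
          exact ((hscc u huI).monotoneOn) (hxr _) (hxr _) (hxm hu.2)
        have hRL : R - L ≤ h * (ε + 2 * M / δ * (x (s (k+1)) - x (s k))) := by
          have hsub : R - L = ∫ u in s k..s (k+1),
              (g2 (x (s (k+1))) u - g2 (x (s k)) u) := by
            rw [intervalIntegral.integral_sub (hiiR k hk) (hiiL k hk)]
          set c : ℝ := ε + 2 * M / δ * (x (s (k+1)) - x (s k)) with hc
          have hpt : ∀ u ∈ Icc (s k) (s (k+1)),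
              g2 (x (s (k+1))) u - g2 (x (s k)) u ≤ c := by
            intro u hu
            have huI : u ∈ Icc (0:ℝ) 1 := ⟨hk1.1.trans hu.1, hu.2.trans hk2.2⟩
            by_cases hj : x (s (k+1)) - x (s k) < δ
            · have habs := hδε (x (s k)) (hxr _) (x (s (k+1))) (hxr _)
                (by rw [abs_of_nonneg (by linarith)]; exact hj) u huI
              have h2 : 2 * M / δ * (x (s (k+1)) - x (s k)) ≥ 0 :=
                mul_nonneg (div_nonneg (by linarith) hδ.le) (by linarith)
              have h3 := (abs_lt.1 habs).2
              simp only [hc]; linarith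
            · push_neg at hj
              have h1 := hM _ (hxr (s (k+1))) u huI
              have h2 := hM _ (hxr (s k)) u huI
              have h3 : 2 * M = 2 * M / δ * δ := by field_simp
              have h4 : 2 * M / δ * δ ≤ 2 * M / δ * (x (s (k+1)) - x (s k)) := by
                have h5 : (0:ℝ) ≤ 2 * M / δ := div_nonneg (by linarith) hδ.le
                nlinarith
              have h5 := (abs_le.1 h1).2
              have h6 := (abs_le.1 h2).1
              simp only [hc]; nlinarith
          have hci : IntervalIntegrable (fun _ : ℝ => c) volume (s k) (s (k+1)) :=
            intervalIntegrable_const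
          have hmono := intervalIntegral.integral_mono_on hkk
            ((hiiR k hk).sub (hiiL k hk)) hci hpt
          rw [← hsub] at hmono
          rw [intervalIntegral.integral_const] at hmono
          have hlen : s (k+1) - s k = h := by simp only [hs]; push_cast; ring
          rw [hlen] at hmono
          simpa [smul_eq_mul, mul_comm] using hmono
        have hd1 : (U (s (k+1)) - U (s k)) - (∫ u in s k..s (k+1), G u) ≤ R - L :=
          sub_le_sub hUR hGL
        have hd2 : L - R ≤ (U (s (k+1)) - U (s k)) - (∫ u in s k..s (k+1), G u) :=
          sub_le_sub hUL hGR
        rw [abs_le]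
        refine ⟨?_, ?_⟩
        · calc -(h * (ε + 2 * M / δ * (x (s (k + 1)) - x (s k)))) ≤ L - R := by
                linarith only [hRL]
            _ ≤ _ := hd2
        · calc (U (s (k+1)) - U (s k)) - (∫ u in s k..s (k+1), G u) ≤ R - L := hd1
            _ ≤ _ := by linarith only [hRL]
      have habs : |D| ≤ ∑ k ∈ Finset.range N,
          |(U (s (k+1)) - U (s k)) - ∫ u in s k..s (k+1), G u| := by
        rw [hD, hUtel, hItel, ← Finset.sum_sub_distrib]
        exact Finset.abs_sum_le_sum_abs _ _
      have hsum : ∑ k ∈ Finset.range N,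
          |(U (s (k+1)) - U (s k)) - ∫ u in s k..s (k+1), G u|
            ≤ ∑ k ∈ Finset.range N, h * (ε + 2 * M / δ * (x (s (k+1)) - x (s k))) :=
        Finset.sum_le_sum (fun k hk => key k (Finset.mem_range.1 hk))
      have hsum2 : ∑ k ∈ Finset.range N, h * (ε + 2 * M / δ * (x (s (k+1)) - x (s k)))
          = N * h * ε + h * (2 * M / δ) * (x b - x a) := by
        have htel : ∑ k ∈ Finset.range N, (x (s (k+1)) - x (s k)) = x b - x a := by
          rw [Finset.sum_range_sub (fun k => x (s k)) N, hs0, hsN]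
        have hexp : ∀ k ∈ Finset.range N,
            h * (ε + 2 * M / δ * (x (s (k+1)) - x (s k)))
              = h * ε + h * (2 * M / δ) * (x (s (k+1)) - x (s k)) := fun k _ => by ring
        rw [Finset.sum_congr rfl hexp, Finset.sum_add_distrib, Finset.sum_const,
          ← Finset.mul_sum, htel, Finset.card_range]
        ring
      have hba1 : b - a ≤ 1 := by linarith [ha.1, hb.2]
      have hNh : (N:ℝ) * h = b - a := by rw [hh]; field_simp
      have hxba : x b - x a ≤ 1 := by
        have h1 := (hxr b).2; have h2 := (hxr a).1; linarith
      have hxba0 : 0 ≤ x b - x a := by have := hxm hab; linarith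
      have hfin : (N:ℝ) * h * ε + h * (2 * M / δ) * (x b - x a) ≤ ε + 2 * M / δ / N := by
        have h1 : (N:ℝ) * h * ε ≤ ε := by rw [hNh]; nlinarith
        have hhle : h ≤ 1 / N := by
          rw [hh]
          exact div_le_div_of_nonneg_right hba1 hNR.le
        have hq : (0:ℝ) ≤ 2 * M / δ := div_nonneg (by linarith) hδ.le
        have h2 : h * (2 * M / δ) * (x b - x a) ≤ (1 / N) * (2 * M / δ) * 1 := by
          have e2 : h * (2 * M / δ) * (x b - x a) ≤ h * (2 * M / δ) * 1 :=
            mul_le_mul_of_nonneg_left hxba (mul_nonneg hh0 hq)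
          have e1 : h * (2 * M / δ) ≤ (1 / N) * (2 * M / δ) :=
            mul_le_mul_of_nonneg_right hhle hq
          calc h * (2 * M / δ) * (x b - x a) ≤ h * (2 * M / δ) * 1 := e2
            _ ≤ (1 / N) * (2 * M / δ) * 1 := mul_le_mul_of_nonneg_right e1 zero_le_one
        have h3 : (1 / (N:ℝ)) * (2 * M / δ) * 1 = 2 * M / δ / N := by ring
        linarith
      calc |D| ≤ _ := habs
        _ ≤ _ := hsum
        _ = _ := hsum2
        _ ≤ ε + 2 * M / δ / N := hfin
    have hlim : Filter.Tendsto (fun N : ℕ => ε + 2 * M / δ / N)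
        Filter.atTop (nhds (ε + 0)) :=
      Filter.Tendsto.add tendsto_const_nhds (tendsto_const_div_atTop_nhds_zero_nat _)
    have := ge_of_tendsto hlim ((Filter.eventually_gt_atTop 0).mono (fun N hN => est N hN))
    simpa using this
  have hD0 : |D| ≤ 0 := by
    by_contra hc
    push_neg at hc
    have := main (|D| / 2) (by linarith)
    linarith
  have hDz : D = 0 := abs_nonpos_iff.1 hD0
  rw [hD] at hDz
  simp only [hU, hG] at hDz ⊢
  linarith
lemma gapPos
    (hderiv : ∀ x ∈ Icc (0:ℝ) 1, ∀ t ∈ Icc (0:ℝ) 1,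
      HasDerivWithinAt (fun s => g x s) (g2 x t) (Icc (0:ℝ) 1) t)
    (hmeas : Measurable (fun p : Icc (0:ℝ) 1 × Icc (0:ℝ) 1 => g2 p.1 p.2))
    (hM : ∀ x ∈ Icc (0:ℝ) 1, ∀ t ∈ Icc (0:ℝ) 1, |g2 x t| ≤ M)
    (hscc : ∀ t ∈ Icc (0:ℝ) 1, StrictMonoOn (fun x => g2 x t) (Icc (0:ℝ) 1))
    (hequi : ∀ ε > (0:ℝ), ∃ δ > (0:ℝ), ∀ x ∈ Icc (0:ℝ) 1, ∀ x' ∈ Icc (0:ℝ) 1,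
      |x' - x| < δ → ∀ t ∈ Icc (0:ℝ) 1, |g2 x' t - g2 x t| < ε)
    (x p x' p' : ℝ → ℝ) (hxm : Monotone x) (hxr : ∀ s, x s ∈ Icc (0:ℝ) 1)
    (hIC : ∀ s ∈ Icc (0:ℝ) 1, ∀ r ∈ Icc (0:ℝ) 1, g (x r) s - p r ≤ g (x s) s - p s)
    (hx'm : Monotone x') (hx's : StrictMonoOn x' (Icc (0:ℝ) 1))
    (hx'r : ∀ s, x' s ∈ Icc (0:ℝ) 1)
    (hp' : ∀ s ∈ Icc (0:ℝ) 1, p' s = p s + (g (x' s) s - g (x s) s)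
      - ∫ u in (0:ℝ)..s, (g2 (x' u) u - g2 (x u) u))
    {τ r : ℝ} (hτ : τ ∈ Icc (0:ℝ) 1) (hr : r ∈ Icc (0:ℝ) 1) (hne : r ≠ τ) :
    g (x' r) τ - p' r < g (x' τ) τ - p' τ := by
  have h0 : (0:ℝ) ∈ Icc (0:ℝ) 1 := ⟨le_refl 0, zero_le_one⟩
  have Ix' : ∀ {a b : ℝ}, a ∈ Icc (0:ℝ) 1 → b ∈ Icc (0:ℝ) 1 →
      IntervalIntegrable (fun u => g2 (x' u) u) volume a b :=
    fun ha hb => intII g2 M hmeas hM x' hx'm hx'r ha hb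
  have Ix : ∀ {a b : ℝ}, a ∈ Icc (0:ℝ) 1 → b ∈ Icc (0:ℝ) 1 →
      IntervalIntegrable (fun u => g2 (x u) u) volume a b :=
    fun ha hb => intII g2 M hmeas hM x hxm hxr ha hb
  have Ic : ∀ {c a b : ℝ}, c ∈ Icc (0:ℝ) 1 → a ∈ Icc (0:ℝ) 1 → b ∈ Icc (0:ℝ) 1 →
      IntervalIntegrable (fun u => g2 c u) volume a b :=
    fun hc ha hb => intIIc g2 M hmeas hM hc ha hb
  -- split the correction integrals
  have hsplit : ∀ s ∈ Icc (0:ℝ) 1,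
      (∫ u in (0:ℝ)..s, (g2 (x' u) u - g2 (x u) u))
        = (∫ u in (0:ℝ)..s, g2 (x' u) u) - ∫ u in (0:ℝ)..s, g2 (x u) u :=
    fun s hs => intervalIntegral.integral_sub (Ix' h0 hs) (Ix h0 hs)
  -- envelope, oriented
  have hUV : (g (x τ) τ - p τ) - (g (x r) r - p r)
      = (∫ u in (0:ℝ)..τ, g2 (x u) u) - ∫ u in (0:ℝ)..r, g2 (x u) u := by
    have hadj : ∀ {a b : ℝ}, a ∈ Icc (0:ℝ) 1 → b ∈ Icc (0:ℝ) 1 →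
        (∫ u in (0:ℝ)..a, g2 (x u) u) + (∫ u in a..b, g2 (x u) u)
          = ∫ u in (0:ℝ)..b, g2 (x u) u :=
      fun ha hb => intervalIntegral.integral_add_adjacent_intervals (Ix h0 ha) (Ix ha hb)
    rcases le_total r τ with hle | hle
    · have := envelope g g2 M hderiv hmeas hM hscc hequi x p hxm hxr hIC hr hτ hle
      have h2 := hadj hr hτ
      linarith
    · have := envelope g g2 M hderiv hmeas hM hscc hequi x p hxm hxr hIC hτ hr hle
      have h2 := hadj hτ hr
      linarith
  -- adjacency for x'
  have hadj' : (∫ u in (0:ℝ)..r, g2 (x' u) u) + (∫ u in r..τ, g2 (x' u) u)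
      = ∫ u in (0:ℝ)..τ, g2 (x' u) u :=
    intervalIntegral.integral_add_adjacent_intervals (Ix' h0 hr) (Ix' hr hτ)
  -- ftc for the fixed allocation x' r
  have hftc : g (x' r) τ - g (x' r) r = ∫ u in r..τ, g2 (x' r) u :=
    (ftc g g2 M hderiv hmeas hM (hx'r r) hr hτ).symm
  -- the strict part
  have hJ : 0 < ∫ u in r..τ, (g2 (x' u) u - g2 (x' r) u) := by
    rcases hne.lt_or_gt with hlt | hlt
    · refine intervalIntegral.intervalIntegral_pos_of_pos_on
        ((Ix' hr hτ).sub (Ic (hx'r r) hr hτ)) ?_ hlt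
      intro u hu
      have huI : u ∈ Icc (0:ℝ) 1 := ⟨hr.1.trans hu.1.le, hu.2.le.trans hτ.2⟩
      have hxx : x' r < x' u := hx's hr huI hu.1
      have := hscc u huI (hx'r r) (hx'r u) hxx
      simpa using sub_pos.2 this
    · have hpos : 0 < ∫ u in τ..r, (g2 (x' r) u - g2 (x' u) u) := by
        refine intervalIntegral.intervalIntegral_pos_of_pos_on
          ((Ic (hx'r r) hτ hr).sub (Ix' hτ hr)) ?_ hlt
        intro u hu
        have huI : u ∈ Icc (0:ℝ) 1 := ⟨hτ.1.trans hu.1.le, hu.2.le.trans hr.2⟩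
        have hxx : x' u < x' r := hx's huI hr hu.2
        have := hscc u huI (hx'r u) (hx'r r) hxx
        simpa using sub_pos.2 this
      have e1 : (∫ u in τ..r, (g2 (x' r) u - g2 (x' u) u))
          = - ∫ u in τ..r, (g2 (x' u) u - g2 (x' r) u) := by
        rw [intervalIntegral.integral_sub (Ic (hx'r r) hτ hr) (Ix' hτ hr),
          intervalIntegral.integral_sub (Ix' hτ hr) (Ic (hx'r r) hτ hr)]
        ring
      have e2 : (∫ u in r..τ, (g2 (x' u) u - g2 (x' r) u))
          = - ∫ u in τ..r, (g2 (x' u) u - g2 (x' r) u) :=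
        intervalIntegral.integral_symm τ r
      rw [e2]; rw [e1] at hpos; linarith
  -- split hJ
  have hJs : (∫ u in r..τ, (g2 (x' u) u - g2 (x' r) u))
      = (∫ u in r..τ, g2 (x' u) u) - ∫ u in r..τ, g2 (x' r) u :=
    intervalIntegral.integral_sub (Ix' hr hτ) (Ic (hx'r r) hr hτ)
  rw [hp' τ hτ, hp' r hr, hsplit τ hτ, hsplit r hr]
  rw [hJs] at hJ
  linarith

lemma pClose
    (hderiv : ∀ x ∈ Icc (0:ℝ) 1, ∀ t ∈ Icc (0:ℝ) 1,
      HasDerivWithinAt (fun s => g x s) (g2 x t) (Icc (0:ℝ) 1) t)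
    (hmeas : Measurable (fun p : Icc (0:ℝ) 1 × Icc (0:ℝ) 1 => g2 p.1 p.2))
    (hM : ∀ x ∈ Icc (0:ℝ) 1, ∀ t ∈ Icc (0:ℝ) 1, |g2 x t| ≤ M)
    (x x' p p' : ℝ → ℝ) (hxr : ∀ s, x s ∈ Icc (0:ℝ) 1) (hx'r : ∀ s, x' s ∈ Icc (0:ℝ) 1)
    (hp' : ∀ s ∈ Icc (0:ℝ) 1, p' s = p s + (g (x' s) s - g (x s) s)
      - ∫ u in (0:ℝ)..s, (g2 (x' u) u - g2 (x u) u))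
    (ε₁ : ℝ)
    (hg0 : ∀ s ∈ Icc (0:ℝ) 1, |g (x' s) 0 - g (x s) 0| ≤ ε₁)
    (hg2d : ∀ s ∈ Icc (0:ℝ) 1, ∀ c ∈ Icc (0:ℝ) 1, ∀ u ∈ Icc (0:ℝ) 1,
      |g2 (x' c) u - g2 (x c) u| ≤ ε₁)
    {τ : ℝ} (hτ : τ ∈ Icc (0:ℝ) 1) :
    |p' τ - p τ| ≤ 3 * ε₁ := by
  have h0 : (0:ℝ) ∈ Icc (0:ℝ) 1 := ⟨le_refl 0, zero_le_one⟩
  have hτ1 : |τ - 0| ≤ 1 := by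
    rw [sub_zero, abs_of_nonneg hτ.1]; exact hτ.2
  -- term 1 : g (x' τ) τ - g (x τ) τ
  have hftc1 : g (x' τ) τ - g (x' τ) 0 = ∫ u in (0:ℝ)..τ, g2 (x' τ) u :=
    (ftc g g2 M hderiv hmeas hM (hx'r τ) h0 hτ).symm
  have hftc2 : g (x τ) τ - g (x τ) 0 = ∫ u in (0:ℝ)..τ, g2 (x τ) u :=
    (ftc g g2 M hderiv hmeas hM (hxr τ) h0 hτ).symm
  have hint1 : |(∫ u in (0:ℝ)..τ, g2 (x' τ) u) - ∫ u in (0:ℝ)..τ, g2 (x τ) u| ≤ ε₁ := by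
    have := intervalIntegral.norm_integral_le_of_norm_le_const
      (f := fun u => g2 (x' τ) u - g2 (x τ) u) (C := ε₁) (a := 0) (b := τ) ?_
    · rw [intervalIntegral.integral_sub (intIIc g2 M hmeas hM (hx'r τ) h0 hτ)
        (intIIc g2 M hmeas hM (hxr τ) h0 hτ)] at this
      have hε₁ : (0:ℝ) ≤ ε₁ := le_trans (abs_nonneg _) (hg2d 0 h0 0 h0 0 h0)
      calc |(∫ u in (0:ℝ)..τ, g2 (x' τ) u) - ∫ u in (0:ℝ)..τ, g2 (x τ) u|
          ≤ ε₁ * |τ - 0| := this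
        _ ≤ ε₁ * 1 := mul_le_mul_of_nonneg_left hτ1 hε₁
        _ = ε₁ := mul_one _
    · intro u hu
      have huI : u ∈ Icc (0:ℝ) 1 := uIoc_sub h0 hτ hu
      simpa [Real.norm_eq_abs] using hg2d τ hτ τ hτ u huI
  have hint2 : |∫ u in (0:ℝ)..τ, (g2 (x' u) u - g2 (x u) u)| ≤ ε₁ := by
    have := intervalIntegral.norm_integral_le_of_norm_le_const
      (f := fun u => g2 (x' u) u - g2 (x u) u) (C := ε₁) (a := 0) (b := τ) ?_
    · have hε₁ : (0:ℝ) ≤ ε₁ := le_trans (abs_nonneg _) (hg2d 0 h0 0 h0 0 h0)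
      calc |∫ u in (0:ℝ)..τ, (g2 (x' u) u - g2 (x u) u)| ≤ ε₁ * |τ - 0| := this
        _ ≤ ε₁ * 1 := mul_le_mul_of_nonneg_left hτ1 hε₁
        _ = ε₁ := mul_one _
    · intro u hu
      have huI : u ∈ Icc (0:ℝ) 1 := uIoc_sub h0 hτ hu
      simpa [Real.norm_eq_abs] using hg2d τ hτ u huI u huI
  have h1 := hg0 τ hτ
  rw [hp' τ hτ]
  have e : p τ + (g (x' τ) τ - g (x τ) τ)
      - (∫ u in (0:ℝ)..τ, (g2 (x' u) u - g2 (x u) u)) - p τ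
      = ((g (x' τ) 0 - g (x τ) 0)
        + ((∫ u in (0:ℝ)..τ, g2 (x' τ) u) - ∫ u in (0:ℝ)..τ, g2 (x τ) u))
        - ∫ u in (0:ℝ)..τ, (g2 (x' u) u - g2 (x u) u) := by
    linarith [hftc1, hftc2]
  rw [e]
  calc |_| ≤ |(g (x' τ) 0 - g (x τ) 0)
        + ((∫ u in (0:ℝ)..τ, g2 (x' τ) u) - ∫ u in (0:ℝ)..τ, g2 (x τ) u)|
        + |∫ u in (0:ℝ)..τ, (g2 (x' u) u - g2 (x u) u)| := abs_sub _ _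
    _ ≤ (|g (x' τ) 0 - g (x τ) 0|
        + |(∫ u in (0:ℝ)..τ, g2 (x' τ) u) - ∫ u in (0:ℝ)..τ, g2 (x τ) u|)
        + |∫ u in (0:ℝ)..τ, (g2 (x' u) u - g2 (x u) u)| := by
          have := abs_add_le (g (x' τ) 0 - g (x τ) 0)
            ((∫ u in (0:ℝ)..τ, g2 (x' τ) u) - ∫ u in (0:ℝ)..τ, g2 (x τ) u)
          linarith
    _ ≤ ε₁ + ε₁ + ε₁ := by linarith
    _ = 3 * ε₁ := by ring


end OneDim

lemma pclamp_idem (s : ℝ) : pclamp (pclamp s) = pclamp s := pclamp_eq (pclamp_mem s)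

lemma upd_mem {n : ℕ} {t : Fin n → ℝ} {i : Fin n} (ht : ∀ j, t j ∈ Icc (0:ℝ) 1)
    {r : ℝ} (hr : r ∈ Icc (0:ℝ) 1) : ∀ j, Function.update t i r j ∈ Icc (0:ℝ) 1 := by
  intro j
  rcases eq_or_ne j i with h | h
  · subst h; simpa using hr
  · rw [Function.update_of_ne h]; exact ht j

set_option maxHeartbeats 1000000 in
/-- Proposition 2 (strictness is essentially for free): any feasible, weakly
strategy-proof direct mechanism is uniformly approximated by feasible, strictly
strategy-proof direct mechanisms. -/
theorem weakly_strategy_proof_virtually_strict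
    (n : ℕ) (hn : 1 ≤ n)
    (g g2 : Fin n → ℝ → ℝ → ℝ)
    (X P : Fin n → (Fin n → ℝ) → ℝ)
    (hderiv : ∀ i, ∀ x ∈ Icc (0:ℝ) 1, ∀ t ∈ Icc (0:ℝ) 1,
      HasDerivWithinAt (fun s => g i x s) (g2 i x t) (Icc (0:ℝ) 1) t)
    (hbdd : ∀ i, ∃ M : ℝ, ∀ x ∈ Icc (0:ℝ) 1, ∀ t ∈ Icc (0:ℝ) 1, |g2 i x t| ≤ M)
    (hmeas : ∀ i, Measurable (fun p : Icc (0:ℝ) 1 × Icc (0:ℝ) 1 => g2 i p.1 p.2))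
    (hscc : ∀ i, ∀ t ∈ Icc (0:ℝ) 1, StrictMonoOn (fun x => g2 i x t) (Icc (0:ℝ) 1))
    (hgcont : ∀ i, ∀ t ∈ Icc (0:ℝ) 1, ContinuousOn (fun x => g i x t) (Icc (0:ℝ) 1))
    (hequi : ∀ i, ∀ ε > (0:ℝ), ∃ δ > (0:ℝ), ∀ x ∈ Icc (0:ℝ) 1, ∀ x' ∈ Icc (0:ℝ) 1,
      |x' - x| < δ → ∀ t ∈ Icc (0:ℝ) 1, |g2 i x' t - g2 i x t| < ε)
    (hX : ∀ i t, (∀ j, t j ∈ Icc (0:ℝ) 1) → X i t ∈ Icc (0:ℝ) 1)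
    -- feasibility of (X, P)
    (hfeas : ∀ t : Fin n → ℝ, (∀ j, t j ∈ Icc (0:ℝ) 1) → ∑ i, X i t ≤ 1)
    -- weak strategy-proofness of (X, P)
    (hwsp : ∀ i, ∀ t : Fin n → ℝ, (∀ j, t j ∈ Icc (0:ℝ) 1) → ∀ r ∈ Icc (0:ℝ) 1,
      g i (X i t) (t i) - P i t
        ≥ g i (X i (Function.update t i r)) (t i) - P i (Function.update t i r)) :
    ∀ ε > (0:ℝ), ∃ X' P' : Fin n → (Fin n → ℝ) → ℝ,
      -- (X', P') is a direct mechanism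
      (∀ i t, (∀ j, t j ∈ Icc (0:ℝ) 1) → X' i t ∈ Icc (0:ℝ) 1) ∧
      -- feasible
      (∀ t : Fin n → ℝ, (∀ j, t j ∈ Icc (0:ℝ) 1) → ∑ i, X' i t ≤ 1) ∧
      -- strictly strategy-proof
      (∀ i, ∀ t : Fin n → ℝ, (∀ j, t j ∈ Icc (0:ℝ) 1) → ∀ r ∈ Icc (0:ℝ) 1, r ≠ t i →
        g i (X' i t) (t i) - P' i t
          > g i (X' i (Function.update t i r)) (t i) - P' i (Function.update t i r)) ∧
      -- uniformly ε-close to (X, P)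
      (∀ i, ∀ t : Fin n → ℝ, (∀ j, t j ∈ Icc (0:ℝ) 1) →
        |X' i t - X i t| ≤ ε ∧ |P' i t - P i t| ≤ ε) := by
  intro ε hε
  have h0I : (0:ℝ) ∈ Icc (0:ℝ) 1 := ⟨le_refl 0, zero_le_one⟩
  have hn0 : (0:ℝ) < n := by exact_mod_cast Nat.pos_of_ne_zero (by omega)
  have hn1 : (1:ℝ) ≤ n := by exact_mod_cast hn
  have h3 : ε / 3 > 0 := by linarith
  choose M hM using hbdd
  choose δ₁ hδ₁pos hδ₁ using fun i => hequi i (ε/3) h3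
  have hUC : ∀ i, ∃ δ > (0:ℝ), ∀ c ∈ Icc (0:ℝ) 1, ∀ c' ∈ Icc (0:ℝ) 1,
      |c' - c| < δ → |g i c' 0 - g i c 0| ≤ ε/3 := by
    intro i
    have huc := isCompact_Icc.uniformContinuousOn_of_continuous (hgcont i 0 h0I)
    rw [Metric.uniformContinuousOn_iff] at huc
    obtain ⟨δ, hδ, hd⟩ := huc (ε/3) h3
    refine ⟨δ, hδ, fun c hc c' hc' hlt => ?_⟩
    have := hd c' hc' c hc (by rwa [Real.dist_eq])
    rw [Real.dist_eq] at this
    exact this.le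
  choose δ₀ hδ₀pos hδ₀ using hUC
  have hFne : (Finset.univ : Finset (Fin n)).Nonempty := ⟨⟨0, by omega⟩, Finset.mem_univ _⟩
  set dm : ℝ := Finset.univ.inf' hFne (fun i => min (δ₀ i) (δ₁ i)) with hdm
  have hdm0 : 0 < dm := by
    rw [hdm, Finset.lt_inf'_iff]
    exact fun i _ => lt_min (hδ₀pos i) (hδ₁pos i)
  set lam : ℝ := min (min ε (1/2)) (dm / 2) with hlam
  have hlam0 : 0 < lam := lt_min (lt_min hε (by norm_num)) (by linarith)
  have hlamε : lam ≤ ε := le_trans (min_le_left _ _) (min_le_left _ _)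
  have hlam2 : lam ≤ 1/2 := le_trans (min_le_left _ _) (min_le_right _ _)
  have hlamδ₀ : ∀ i, lam < δ₀ i := fun i =>
    lt_of_le_of_lt (min_le_right _ _)
      (lt_of_lt_of_le (by linarith : dm / 2 < dm)
        (le_trans (Finset.inf'_le _ (Finset.mem_univ i)) (min_le_left _ _)))
  have hlamδ₁ : ∀ i, lam < δ₁ i := fun i =>
    lt_of_le_of_lt (min_le_right _ _)
      (lt_of_lt_of_le (by linarith : dm / 2 < dm)
        (le_trans (Finset.inf'_le _ (Finset.mem_univ i)) (min_le_right _ _)))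
  set X' : Fin n → (Fin n → ℝ) → ℝ :=
    fun i t => (1 - lam) * X i t + lam * pclamp (t i) / n with hX'
  set P' : Fin n → (Fin n → ℝ) → ℝ :=
    fun i t => P i t
      + (g i ((1 - lam) * X i t + lam * pclamp (t i) / n) (pclamp (t i))
          - g i (X i t) (pclamp (t i)))
      - ∫ u in (0:ℝ)..(pclamp (t i)),
          (g2 i ((1 - lam) * X i (Function.update t i (pclamp u)) + lam * pclamp u / n) u
            - g2 i (X i (Function.update t i (pclamp u))) u) with hP'
  refine ⟨X', P', ?_, ?_, ?_, ?_⟩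
  · -- range
    intro i t ht
    have h1 := hX i t ht
    have h2 := pclamp_mem (t i)
    have h4 : 0 ≤ lam * pclamp (t i) / n := div_nonneg (mul_nonneg hlam0.le h2.1) hn0.le
    have h5 : lam * pclamp (t i) / n ≤ lam := by
      rw [div_le_iff₀ hn0]
      nlinarith [mul_nonneg hlam0.le (sub_nonneg.2 (h2.2.trans hn1))]
    constructor
    · simp only [hX']
      nlinarith [mul_nonneg (by linarith : (0:ℝ) ≤ 1 - lam) h1.1, h4]
    · simp only [hX']
      nlinarith [mul_le_mul_of_nonneg_left h1.2 (by linarith : (0:ℝ) ≤ 1 - lam), h5]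
  · -- feasibility
    intro t ht
    have hsum : ∑ i, X' i t = (1 - lam) * (∑ i, X i t) + ∑ i, lam * pclamp (t i) / n := by
      simp only [hX']
      rw [Finset.sum_add_distrib, Finset.mul_sum]
    have hsum2 : ∑ i : Fin n, lam * pclamp (t i) / n ≤ lam := by
      have h1 : ∀ i : Fin n, lam * pclamp (t i) / n ≤ lam / n := by
        intro i
        have h2 := pclamp_mem (t i)
        have h3 : lam * pclamp (t i) ≤ lam := by
          nlinarith [mul_nonneg hlam0.le (sub_nonneg.2 h2.2)]
        exact div_le_div_of_nonneg_right h3 hn0.le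
      calc ∑ i : Fin n, lam * pclamp (t i) / n ≤ ∑ _i : Fin n, lam / n :=
            Finset.sum_le_sum (fun i _ => h1 i)
        _ = n * (lam / n) := by rw [Finset.sum_const, Finset.card_univ, Fintype.card_fin]; ring
        _ = lam := by field_simp
    have h6 := hfeas t ht
    rw [hsum]
    nlinarith
  · -- strict strategy-proofness
    intro i t ht r hr hne
    set x : ℝ → ℝ := fun r => X i (Function.update t i (pclamp r)) with hxdef
    set p : ℝ → ℝ := fun r => P i (Function.update t i (pclamp r)) with hpdef
    set x' : ℝ → ℝ := fun r => (1 - lam) * x r + lam * pclamp r / n with hx'def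
    have hxr : ∀ s, x s ∈ Icc (0:ℝ) 1 := fun s => hX i _ (upd_mem ht (pclamp_mem s))
    have hICx : ∀ s ∈ Icc (0:ℝ) 1, ∀ r' ∈ Icc (0:ℝ) 1,
        g i (x r') s - p r' ≤ g i (x s) s - p s := by
      intro s hs r' hr'
      have h := hwsp i (Function.update t i s) (upd_mem ht hs) r' hr'
      simp only [Function.update_idem, Function.update_self] at h
      simp only [hxdef, hpdef, pclamp_eq hs, pclamp_eq hr']
      exact h
    have hmOn : MonotoneOn x (Icc (0:ℝ) 1) :=
      xmonoOn (g i) (g2 i) (M i) (hderiv i) (hmeas i) (hM i) (hscc i) x p hxr hICx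
    have hxm : Monotone x := by
      intro a b hab
      have e1 : x a = x (pclamp a) := by simp only [hxdef, pclamp_idem]
      have e2 : x b = x (pclamp b) := by simp only [hxdef, pclamp_idem]
      rw [e1, e2]
      exact hmOn (pclamp_mem a) (pclamp_mem b) (pclamp_mono hab)
    have hx'r : ∀ s, x' s ∈ Icc (0:ℝ) 1 := by
      intro s
      have h1 := hxr s
      have h2 := pclamp_mem s
      have h4 : 0 ≤ lam * pclamp s / n := div_nonneg (mul_nonneg hlam0.le h2.1) hn0.le
      have h5 : lam * pclamp s / n ≤ lam := by
        rw [div_le_iff₀ hn0]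
        nlinarith [mul_nonneg hlam0.le (sub_nonneg.2 (h2.2.trans hn1))]
      constructor
      · simp only [hx'def]
        nlinarith [mul_nonneg (by linarith : (0:ℝ) ≤ 1 - lam) h1.1, h4]
      · simp only [hx'def]
        nlinarith [mul_le_mul_of_nonneg_left h1.2 (by linarith : (0:ℝ) ≤ 1 - lam), h5]
    have hx'm : Monotone x' := by
      intro a b hab
      simp only [hx'def]
      have h1 := mul_le_mul_of_nonneg_left (hxm hab) (by linarith : (0:ℝ) ≤ 1 - lam)
      have h2 : lam * pclamp a / n ≤ lam * pclamp b / n :=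
        div_le_div_of_nonneg_right
          (mul_le_mul_of_nonneg_left (pclamp_mono hab) hlam0.le) hn0.le
      linarith
    have hx's : StrictMonoOn x' (Icc (0:ℝ) 1) := by
      intro a ha b hb hab
      simp only [hx'def]
      have h1 := mul_le_mul_of_nonneg_left (hmOn ha hb hab.le) (by linarith : (0:ℝ) ≤ 1 - lam)
      have h2 : lam * pclamp a / n < lam * pclamp b / n := by
        rw [pclamp_eq ha, pclamp_eq hb]
        apply div_lt_div_of_pos_right ?_ hn0
        · nlinarith
      linarith
    have hp'match : ∀ s ∈ Icc (0:ℝ) 1, (fun s => P' i (Function.update t i s)) s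
        = p s + (g i (x' s) s - g i (x s) s)
          - ∫ u in (0:ℝ)..s, (g2 i (x' u) u - g2 i (x u) u) := by
      intro s hs
      simp only [hP', hxdef, hpdef, hx'def, Function.update_idem, Function.update_self,
        pclamp_eq hs]
    have hgap := gapPos (g i) (g2 i) (M i) (hderiv i) (hmeas i) (hM i) (hscc i) (hequi i)
      x p x' (fun s => P' i (Function.update t i s)) hxm hxr hICx hx'm hx's hx'r hp'match
      (ht i) hr hne
    have e1 : Function.update t i (t i) = t := Function.update_eq_self i t
    have e2 : x' (t i) = X' i t := by
      simp only [hx'def, hxdef, hX', pclamp_eq (ht i), e1]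
    have e3 : x' r = X' i (Function.update t i r) := by
      simp only [hx'def, hxdef, hX', pclamp_eq hr, Function.update_self, Function.update_idem]
    simp only [e1] at hgap
    rw [← e2, ← e3]
    exact hgap
  · -- closeness
    intro i t ht
    set x : ℝ → ℝ := fun r => X i (Function.update t i (pclamp r)) with hxdef
    set p : ℝ → ℝ := fun r => P i (Function.update t i (pclamp r)) with hpdef
    set x' : ℝ → ℝ := fun r => (1 - lam) * x r + lam * pclamp r / n with hx'def
    have hxr : ∀ s, x s ∈ Icc (0:ℝ) 1 := fun s => hX i _ (upd_mem ht (pclamp_mem s))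
    have hx'r : ∀ s, x' s ∈ Icc (0:ℝ) 1 := by
      intro s
      have h1 := hxr s
      have h2 := pclamp_mem s
      have h4 : 0 ≤ lam * pclamp s / n := div_nonneg (mul_nonneg hlam0.le h2.1) hn0.le
      have h5 : lam * pclamp s / n ≤ lam := by
        rw [div_le_iff₀ hn0]
        nlinarith [mul_nonneg hlam0.le (sub_nonneg.2 (h2.2.trans hn1))]
      constructor
      · simp only [hx'def]
        nlinarith [mul_nonneg (by linarith : (0:ℝ) ≤ 1 - lam) h1.1, h4]
      · simp only [hx'def]
        nlinarith [mul_le_mul_of_nonneg_left h1.2 (by linarith : (0:ℝ) ≤ 1 - lam), h5]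
    have hdist : ∀ s, |x' s - x s| ≤ lam := by
      intro s
      have h1 := hxr s
      have h2 := pclamp_mem s
      have e : x' s - x s = lam * (pclamp s / n - x s) := by
        simp only [hx'def]; ring
      rw [e, abs_mul, abs_of_pos hlam0]
      have h6 : |pclamp s / n - x s| ≤ 1 := by
        rw [abs_le]
        have h7 : 0 ≤ pclamp s / n := div_nonneg h2.1 hn0.le
        have h8 : pclamp s / n ≤ 1 := by rw [div_le_one hn0]; linarith [h2.2, hn1]
        constructor <;> nlinarith [h1.1, h1.2]
      nlinarith [hlam0.le]
    have hp'match : ∀ s ∈ Icc (0:ℝ) 1, (fun s => P' i (Function.update t i s)) s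
        = p s + (g i (x' s) s - g i (x s) s)
          - ∫ u in (0:ℝ)..s, (g2 i (x' u) u - g2 i (x u) u) := by
      intro s hs
      simp only [hP', hxdef, hpdef, hx'def, Function.update_idem, Function.update_self,
        pclamp_eq hs]
    have hg0 : ∀ s ∈ Icc (0:ℝ) 1, |g i (x' s) 0 - g i (x s) 0| ≤ ε/3 :=
      fun s _ => hδ₀ i (x s) (hxr s) (x' s) (hx'r s)
        (lt_of_le_of_lt (hdist s) (hlamδ₀ i))
    have hg2d : ∀ s ∈ Icc (0:ℝ) 1, ∀ c ∈ Icc (0:ℝ) 1, ∀ u ∈ Icc (0:ℝ) 1,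
        |g2 i (x' c) u - g2 i (x c) u| ≤ ε/3 :=
      fun s _ c _ u hu => (hδ₁ i (x c) (hxr c) (x' c) (hx'r c)
        (lt_of_le_of_lt (hdist c) (hlamδ₁ i)) u hu).le
    have hpc := pClose (g i) (g2 i) (M i) (hderiv i) (hmeas i) (hM i)
      x x' p (fun s => P' i (Function.update t i s)) hxr hx'r hp'match (ε/3) hg0 hg2d (ht i)
    have e1 : Function.update t i (t i) = t := Function.update_eq_self i t
    have e4 : p (t i) = P i t := by simp only [hpdef, pclamp_eq (ht i), e1]
    simp only [e1, e4] at hpc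
    constructor
    · -- X' closeness
      have h1 := hX i t ht
      have h2 := pclamp_mem (t i)
      have e : X' i t - X i t = lam * (pclamp (t i) / n - X i t) := by
        simp only [hX']; ring
      rw [e, abs_mul, abs_of_pos hlam0]
      have h6 : |pclamp (t i) / n - X i t| ≤ 1 := by
        rw [abs_le]
        have h7 : 0 ≤ pclamp (t i) / n := div_nonneg h2.1 hn0.le
        have h8 : pclamp (t i) / n ≤ 1 := by rw [div_le_one hn0]; linarith [h2.2, hn1]
        constructor <;> nlinarith [h1.1, h1.2]
      nlinarith [hlam0.le]
    · calc |P' i t - P i t| ≤ 3 * (ε/3) := hpc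
        _ = ε := by ring
end

section
/- Let g : [0,1] × [0,1] → ℝ be such that g₂(x,t) := ∂g(x,t)/∂t exists at every (x,t) ∈ [0,1]², g₂ is bounded and Borel measurable on [0,1]², g(·,0) is continuous on [0,1], and the family {g₂(·,s)}_{s ∈ [0,1]} is equicontinuous. Then for every ε > 0 there exists δ > 0 with the following property: for any Borel measurable X, X' : [0,1] → [0,1] with |X'(t) − X(t)| ≤ δ for all t ∈ [0,1], and any p₀ ∈ ℝ, the payment rules P and P' defined by the envelope formula P(t) = p₀ − g(X(0),0) + g(X(t),t) − ∫₀ᵗ g₂(X(s),s) ds and P'(t) = p₀ − g(X'(0),0) + g(X'(t),t) − ∫₀ᵗ g₂(X'(s),s) ds satisfy |P'(t) − P(t)| ≤ ε for all t ∈ [0,1]. (Uniform closeness of envelope payments, the key analytic step (△) in the proof of Proposition 2.) -/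
open MeasureTheory Set

/-- Uniform closeness of envelope payments (key analytic step (△) in the proof of
Proposition 2): envelope payments depend uniformly continuously on the allocation
rule. -/
theorem envelope_payments_uniformly_close
    (g g2 : ℝ → ℝ → ℝ)
    (hderiv : ∀ x ∈ Icc (0:ℝ) 1, ∀ t ∈ Icc (0:ℝ) 1,
      HasDerivWithinAt (fun s => g x s) (g2 x t) (Icc (0:ℝ) 1) t)
    (hbdd : ∃ M : ℝ, ∀ x ∈ Icc (0:ℝ) 1, ∀ t ∈ Icc (0:ℝ) 1, |g2 x t| ≤ M)
    (hmeas : Measurable (fun p : Icc (0:ℝ) 1 × Icc (0:ℝ) 1 => g2 p.1 p.2))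
    (hcont0 : ContinuousOn (fun x => g x 0) (Icc (0:ℝ) 1))
    (hequi : ∀ ε > (0:ℝ), ∃ δ > (0:ℝ), ∀ x ∈ Icc (0:ℝ) 1, ∀ x' ∈ Icc (0:ℝ) 1,
      |x' - x| < δ → ∀ s ∈ Icc (0:ℝ) 1, |g2 x' s - g2 x s| < ε) :
    ∀ ε > (0:ℝ), ∃ δ > (0:ℝ), ∀ X X' : ℝ → ℝ,
      (∀ s ∈ Icc (0:ℝ) 1, X s ∈ Icc (0:ℝ) 1) →
      (∀ s ∈ Icc (0:ℝ) 1, X' s ∈ Icc (0:ℝ) 1) →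
      Measurable ((Icc (0:ℝ) 1).restrict X) →
      Measurable ((Icc (0:ℝ) 1).restrict X') →
      (∀ s ∈ Icc (0:ℝ) 1, |X' s - X s| ≤ δ) →
      ∀ p₀ : ℝ, ∀ P P' : ℝ → ℝ,
        (∀ t ∈ Icc (0:ℝ) 1,
          P t = p₀ - g (X 0) 0 + g (X t) t - ∫ s in (0:ℝ)..t, g2 (X s) s) →
        (∀ t ∈ Icc (0:ℝ) 1,
          P' t = p₀ - g (X' 0) 0 + g (X' t) t - ∫ s in (0:ℝ)..t, g2 (X' s) s) →
        ∀ t ∈ Icc (0:ℝ) 1, |P' t - P t| ≤ ε := by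
  obtain ⟨M, hM⟩ := hbdd
  -- Integrability of s ↦ g2 (Y s) s for measurable Y into [0,1]
  have key : ∀ Y : ℝ → ℝ, (∀ s ∈ Icc (0:ℝ) 1, Y s ∈ Icc (0:ℝ) 1) →
      Measurable ((Icc (0:ℝ) 1).restrict Y) → ∀ t ∈ Icc (0:ℝ) 1,
      IntervalIntegrable (fun s => g2 (Y s) s) volume 0 t := by
    intro Y hY hmY t ht
    have hsub : Measurable (fun s : Icc (0:ℝ) 1 => g2 (Y s) s) := by
      have hpair : Measurable
          (fun s : Icc (0:ℝ) 1 => ((⟨Y s, hY s s.2⟩ : Icc (0:ℝ) 1), s)) :=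
        (hmY.subtype_mk).prodMk measurable_id
      exact hmeas.comp hpair
    have haem : AEMeasurable (fun s => g2 (Y s) s) (volume.restrict (Icc (0:ℝ) 1)) :=
      aemeasurable_restrict_of_measurable_subtype measurableSet_Icc hsub
    have hIoc : Ioc (0:ℝ) t ⊆ Icc (0:ℝ) 1 := fun s hs => ⟨hs.1.le, hs.2.trans ht.2⟩
    rw [intervalIntegrable_iff, uIoc_of_le ht.1]
    refine Integrable.mono' (integrable_const M)
      ((haem.mono_measure (Measure.restrict_mono hIoc le_rfl)).aestronglyMeasurable) ?_
    refine (ae_restrict_iff' measurableSet_Ioc).2 (ae_of_all _ fun s hs => ?_)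
    rw [Real.norm_eq_abs]
    exact hM (Y s) (hY s (hIoc hs)) s (hIoc hs)
  -- FTC for fixed x
  have ftc : ∀ x ∈ Icc (0:ℝ) 1, ∀ t ∈ Icc (0:ℝ) 1,
      g x t = g x 0 + ∫ s in (0:ℝ)..t, g2 x s := by
    intro x hx t ht
    have hcont : ContinuousOn (g x) (Icc (0:ℝ) 1) :=
      fun u hu => (hderiv x hx u hu).continuousWithinAt
    have hint : IntervalIntegrable (fun s => g2 x s) volume 0 t :=
      key (fun _ => x) (fun _ _ => hx) measurable_const t ht
    have heq : ∫ s in (0:ℝ)..t, g2 x s = g x t - g x 0 := by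
      refine intervalIntegral.integral_eq_sub_of_hasDeriv_right_of_le ht.1
        (hcont.mono (Icc_subset_Icc le_rfl ht.2)) (fun u hu => ?_) hint
      exact (hderiv x hx u ⟨hu.1.le, (hu.2.trans_le ht.2).le⟩).mono_of_mem_nhdsWithin
        (Icc_mem_nhdsGT_of_mem ⟨hu.1.le, hu.2.trans_le ht.2⟩)
    linarith
  intro ε hε
  obtain ⟨δ₁, hδ₁, h1⟩ := hequi (ε/4) (by positivity)
  have huc := isCompact_Icc.uniformContinuousOn_of_continuous hcont0
  rw [Metric.uniformContinuousOn_iff] at huc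
  obtain ⟨δ₂, hδ₂, h2⟩ := huc (ε/4) (by positivity)
  refine ⟨min δ₁ δ₂ / 2, by positivity, ?_⟩
  intro X X' hX hX' hmX hmX' hXX' p₀ P P' hP hP' t ht
  have h0 : (0:ℝ) ∈ Icc (0:ℝ) 1 := ⟨le_refl 0, zero_le_one⟩
  have hd₁ : ∀ s ∈ Icc (0:ℝ) 1, |X' s - X s| < δ₁ := fun s hs =>
    lt_of_le_of_lt (hXX' s hs) (by have := min_le_left δ₁ δ₂; linarith)
  have hd₂ : ∀ s ∈ Icc (0:ℝ) 1, |X' s - X s| < δ₂ := fun s hs =>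
    lt_of_le_of_lt (hXX' s hs) (by have := min_le_right δ₁ δ₂; linarith)
  -- bounds on the g(·,0) differences
  have bA : |g (X' t) 0 - g (X t) 0| ≤ ε/4 := by
    have := h2 (X' t) (hX' t ht) (X t) (hX t ht)
      (by rw [Real.dist_eq]; exact hd₂ t ht)
    rw [Real.dist_eq] at this; exact this.le
  have bB : |g (X' 0) 0 - g (X 0) 0| ≤ ε/4 := by
    have := h2 (X' 0) (hX' 0 h0) (X 0) (hX 0 h0)
      (by rw [Real.dist_eq]; exact hd₂ 0 h0)
    rw [Real.dist_eq] at this; exact this.le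
  have hIoc : Ioc (0:ℝ) t ⊆ Icc (0:ℝ) 1 := fun s hs => ⟨hs.1.le, hs.2.trans ht.2⟩
  -- integrabilities
  have iX : IntervalIntegrable (fun s => g2 (X s) s) volume 0 t := key X hX hmX t ht
  have iX' : IntervalIntegrable (fun s => g2 (X' s) s) volume 0 t := key X' hX' hmX' t ht
  have iCt : IntervalIntegrable (fun s => g2 (X t) s) volume 0 t :=
    key (fun _ => X t) (fun _ _ => hX t ht) measurable_const t ht
  have iCt' : IntervalIntegrable (fun s => g2 (X' t) s) volume 0 t :=
    key (fun _ => X' t) (fun _ _ => hX' t ht) measurable_const t ht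
  -- bound on the first integral difference
  have bC : |∫ s in (0:ℝ)..t, (g2 (X' t) s - g2 (X t) s)| ≤ ε/4 := by
    have hb : ∀ s ∈ Set.uIoc (0:ℝ) t, ‖g2 (X' t) s - g2 (X t) s‖ ≤ ε/4 := by
      intro s hs
      rw [uIoc_of_le ht.1] at hs
      exact (h1 (X t) (hX t ht) (X' t) (hX' t ht) (hd₁ t ht) s (hIoc hs)).le
    have := intervalIntegral.norm_integral_le_of_norm_le_const hb
    rw [Real.norm_eq_abs] at this
    have htabs : |t - 0| ≤ 1 := by rw [abs_of_nonneg (by linarith [ht.1])]; linarith [ht.2]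
    nlinarith [abs_nonneg (∫ s in (0:ℝ)..t, (g2 (X' t) s - g2 (X t) s))]
  -- bound on the second integral difference
  have bD : |∫ s in (0:ℝ)..t, (g2 (X' s) s - g2 (X s) s)| ≤ ε/4 := by
    have hb : ∀ s ∈ Set.uIoc (0:ℝ) t, ‖g2 (X' s) s - g2 (X s) s‖ ≤ ε/4 := by
      intro s hs
      rw [uIoc_of_le ht.1] at hs
      exact (h1 (X s) (hX s (hIoc hs)) (X' s) (hX' s (hIoc hs))
        (hd₁ s (hIoc hs)) s (hIoc hs)).le
    have := intervalIntegral.norm_integral_le_of_norm_le_const hb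
    rw [Real.norm_eq_abs] at this
    have htabs : |t - 0| ≤ 1 := by rw [abs_of_nonneg (by linarith [ht.1])]; linarith [ht.2]
    nlinarith [abs_nonneg (∫ s in (0:ℝ)..t, (g2 (X' s) s - g2 (X s) s))]
  have isub1 : ∫ s in (0:ℝ)..t, (g2 (X' t) s - g2 (X t) s)
      = (∫ s in (0:ℝ)..t, g2 (X' t) s) - ∫ s in (0:ℝ)..t, g2 (X t) s :=
    intervalIntegral.integral_sub iCt' iCt
  have isub2 : ∫ s in (0:ℝ)..t, (g2 (X' s) s - g2 (X s) s)
      = (∫ s in (0:ℝ)..t, g2 (X' s) s) - ∫ s in (0:ℝ)..t, g2 (X s) s :=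
    intervalIntegral.integral_sub iX' iX
  have main : P' t - P t =
      (g (X' t) 0 - g (X t) 0) - (g (X' 0) 0 - g (X 0) 0)
      + (∫ s in (0:ℝ)..t, (g2 (X' t) s - g2 (X t) s))
      - ∫ s in (0:ℝ)..t, (g2 (X' s) s - g2 (X s) s) := by
    rw [hP t ht, hP' t ht, isub1, isub2, ftc (X t) (hX t ht) t ht,
      ftc (X' t) (hX' t ht) t ht]
    ring
  obtain ⟨a1, a2⟩ := abs_le.mp bA
  obtain ⟨b1, b2⟩ := abs_le.mp bB
  obtain ⟨c1, c2⟩ := abs_le.mp bC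
  obtain ⟨d1, d2⟩ := abs_le.mp bD
  rw [main, abs_le]
  constructor <;> linarith
end

section
/- (Corollary 1.) There are n ≥ 1 agents. For each agent i, let gⁱ : [0,1] × [0,1] → ℝ satisfy: g₂ⁱ(x,t) := ∂gⁱ(x,t)/∂t exists at every (x,t) ∈ [0,1]², g₂ⁱ is bounded and Borel measurable on [0,1]², x ↦ g₂ⁱ(x,t) is strictly increasing on [0,1] for each t, gⁱ(·,t) is continuous on [0,1] for each t, and {g₂ⁱ(·,t)}_{t∈[0,1]} is equicontinuous. Call a direct mechanism (X,P) feasible iff Σᵢ Xⁱ(t) ≤ 1 for all t ∈ [0,1]ⁿ. Let Π be a real-valued function on the set of direct mechanisms that is continuous with respect to uniform closeness: for every ε > 0 there exists δ > 0 such that whenever two direct mechanisms (X,P) and (X',P') satisfy |X'ⁱ(t) − Xⁱ(t)| ≤ δ and |P'ⁱ(t) − Pⁱ(t)| ≤ δ for all i and t, then |Π(X',P') − Π(X,P)| < ε. If (X,P) is feasible and weakly strategy-proof, then for every ε > 0 there exists a feasible, strictly strategy-proof direct mechanism (X',P') with Π(X',P') ≥ Π(X,P) − ε. -/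
open MeasureTheory Set


namespace SEFF

lemma integrable_comp (G : ℝ → ℝ → ℝ)
    (hGmeas : Measurable (fun p : Icc (0:ℝ) 1 × Icc (0:ℝ) 1 => G p.1 p.2))
    (M : ℝ) (hM : ∀ x ∈ Icc (0:ℝ) 1, ∀ t ∈ Icc (0:ℝ) 1, |G x t| ≤ M)
    (x : ℝ → ℝ) (hmono : MonotoneOn x (Icc (0:ℝ) 1))
    (hx : ∀ r ∈ Icc (0:ℝ) 1, x r ∈ Icc (0:ℝ) 1)
    {a b : ℝ} (ha : a ∈ Icc (0:ℝ) 1) (hb : b ∈ Icc (0:ℝ) 1) :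
    IntervalIntegrable (fun s => G (x s) s) volume a b := by
  set π : ℝ → Icc (0:ℝ) 1 := projIcc 0 1 zero_le_one with hπ
  have hπmeas : Measurable π := continuous_projIcc.measurable
  have hxm : Monotone fun s => x (π s) := fun s s' hss =>
    hmono (π s).2 (π s').2 (Subtype.coe_le_coe.2 (@monotone_projIcc ℝ _ 0 1 zero_le_one _ _ hss))
  have hxmem : ∀ s, x (π s) ∈ Icc (0:ℝ) 1 := fun s => hx _ (π s).2
  set F : ℝ → ℝ := fun s => G (x (π s)) (π s) with hF
  have hFmeas : Measurable F := by
    have h1 : Measurable fun s => (⟨x (π s), hxmem s⟩ : Icc (0:ℝ) 1) :=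
      (hxm.measurable).subtype_mk
    exact hGmeas.comp (h1.prodMk hπmeas)
  have hFbd : ∀ s, |F s| ≤ |M| := fun s => (hM _ (hxmem s) _ (π s).2).trans (le_abs_self M)
  have hFeq : EqOn F (fun s => G (x s) s) (uIcc a b) := by
    intro s hs
    have hs1 : s ∈ Icc (0:ℝ) 1 := uIcc_subset_Icc ha hb hs
    simp only [hF, hπ, projIcc_of_mem zero_le_one hs1]
  have hFint : IntervalIntegrable F volume a b := by
    apply IntervalIntegrable.mono_fun' (g := fun _ => |M|)
      intervalIntegrable_const hFmeas.aestronglyMeasurable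
    filter_upwards with s
    rw [Real.norm_eq_abs]; exact hFbd s
  refine hFint.congr ?_
  intro s hs
  exact hFeq (uIoc_subset_uIcc hs)

end SEFF

namespace SEFF

lemma ftc (h G : ℝ → ℝ → ℝ)
    (hderiv : ∀ x ∈ Icc (0:ℝ) 1, ∀ t ∈ Icc (0:ℝ) 1,
      HasDerivWithinAt (fun s => h x s) (G x t) (Icc (0:ℝ) 1) t)
    (hGmeas : Measurable (fun p : Icc (0:ℝ) 1 × Icc (0:ℝ) 1 => G p.1 p.2))
    (M : ℝ) (hM : ∀ x ∈ Icc (0:ℝ) 1, ∀ t ∈ Icc (0:ℝ) 1, |G x t| ≤ M)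
    {x : ℝ} (hx : x ∈ Icc (0:ℝ) 1)
    {a b : ℝ} (ha : a ∈ Icc (0:ℝ) 1) (hb : b ∈ Icc (0:ℝ) 1) :
    ∫ s in a..b, G x s = h x b - h x a := by
  have hint : ∀ {c d : ℝ}, c ∈ Icc (0:ℝ) 1 → d ∈ Icc (0:ℝ) 1 →
      IntervalIntegrable (fun s => G x s) volume c d := fun hc hd =>
    integrable_comp G hGmeas M hM (fun _ => x) (fun _ _ _ _ _ => le_refl x)
      (fun _ _ => hx) hc hd
  have hcont : ContinuousOn (fun s => h x s) (Icc (0:ℝ) 1) :=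
    fun t ht => (hderiv x hx t ht).continuousWithinAt
  have key : ∀ {c d : ℝ}, c ∈ Icc (0:ℝ) 1 → d ∈ Icc (0:ℝ) 1 → c ≤ d →
      ∫ s in c..d, G x s = h x d - h x c := by
    intro c d hc hd hcd
    refine intervalIntegral.integral_eq_sub_of_hasDeriv_right_of_le hcd
      (hcont.mono (Icc_subset_Icc hc.1 hd.2)) (fun t ht => ?_) (hint hc hd)
    have ht01 : t ∈ Ioo (0:ℝ) 1 := ⟨lt_of_le_of_lt hc.1 ht.1, lt_of_lt_of_le ht.2 hd.2⟩
    exact (((hderiv x hx t (Ioo_subset_Icc_self ht01)).hasDerivAt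
      (Icc_mem_nhds ht01.1 ht01.2)).hasDerivWithinAt)
  rcases le_total a b with hab | hab
  · exact key ha hb hab
  · rw [intervalIntegral.integral_symm, key hb ha hab]; ring

end SEFF

namespace SEFF

section WSP

variable (h G : ℝ → ℝ → ℝ)
    (hderiv : ∀ x ∈ Icc (0:ℝ) 1, ∀ t ∈ Icc (0:ℝ) 1,
      HasDerivWithinAt (fun s => h x s) (G x t) (Icc (0:ℝ) 1) t)
    (hGmeas : Measurable (fun p : Icc (0:ℝ) 1 × Icc (0:ℝ) 1 => G p.1 p.2))
    (M : ℝ) (hM : ∀ x ∈ Icc (0:ℝ) 1, ∀ t ∈ Icc (0:ℝ) 1, |G x t| ≤ M)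
    (hscc : ∀ t ∈ Icc (0:ℝ) 1, StrictMonoOn (fun x => G x t) (Icc (0:ℝ) 1))
    (x p : ℝ → ℝ)
    (hx : ∀ r ∈ Icc (0:ℝ) 1, x r ∈ Icc (0:ℝ) 1)
    (hwsp : ∀ τ ∈ Icc (0:ℝ) 1, ∀ r ∈ Icc (0:ℝ) 1,
      h (x τ) τ - p τ ≥ h (x r) τ - p r)

include hderiv hGmeas hM hx hwsp in
/-- the sandwich bounds on utility increments implied by weak strategy-proofness -/
lemma sandwich {a b : ℝ} (ha : a ∈ Icc (0:ℝ) 1) (hb : b ∈ Icc (0:ℝ) 1) :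
    (∫ s in a..b, G (x a) s) ≤ (h (x b) b - p b) - (h (x a) a - p a) ∧
    (h (x b) b - p b) - (h (x a) a - p a) ≤ ∫ s in a..b, G (x b) s := by
  constructor
  · have h1 := hwsp b hb a ha
    have := ftc h G hderiv hGmeas M hM (hx a ha) ha hb
    rw [this]; linarith
  · have h2 := hwsp a ha b hb
    have := ftc h G hderiv hGmeas M hM (hx b hb) ha hb
    rw [this]; linarith

include hderiv hGmeas hM hscc hx hwsp in
lemma x_mono : MonotoneOn x (Icc (0:ℝ) 1) := by
  intro a ha b hb hab
  rcases eq_or_lt_of_le hab with rfl | hab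
  · exact le_refl _
  by_contra hlt
  push_neg at hlt
  have hs := sandwich h G hderiv hGmeas M hM x p hx hwsp ha hb
  have hpos : 0 < ∫ s in a..b, (G (x a) s - G (x b) s) := by
    refine intervalIntegral.intervalIntegral_pos_of_pos_on ?_ ?_ hab
    · exact (integrable_comp G hGmeas M hM (fun _ => x a) (fun _ _ _ _ _ => le_refl _)
        (fun _ _ => hx a ha) ha hb).sub
        (integrable_comp G hGmeas M hM (fun _ => x b) (fun _ _ _ _ _ => le_refl _)
        (fun _ _ => hx b hb) ha hb)
    · intro s hs
      have hsI : s ∈ Icc (0:ℝ) 1 := ⟨le_trans ha.1 hs.1.le, le_trans hs.2.le hb.2⟩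
      have := hscc s hsI (hx b hb) (hx a ha) hlt
      simpa using sub_pos.2 this
  rw [intervalIntegral.integral_sub
      (integrable_comp G hGmeas M hM (fun _ => x a) (fun _ _ _ _ _ => le_refl _)
        (fun _ _ => hx a ha) ha hb)
      (integrable_comp G hGmeas M hM (fun _ => x b) (fun _ _ _ _ _ => le_refl _)
        (fun _ _ => hx b hb) ha hb)] at hpos
  linarith [hs.1, hs.2]

end WSP

end SEFF

namespace SEFF

section WSP2

variable (h G : ℝ → ℝ → ℝ)
    (hderiv : ∀ x ∈ Icc (0:ℝ) 1, ∀ t ∈ Icc (0:ℝ) 1,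
      HasDerivWithinAt (fun s => h x s) (G x t) (Icc (0:ℝ) 1) t)
    (hGmeas : Measurable (fun p : Icc (0:ℝ) 1 × Icc (0:ℝ) 1 => G p.1 p.2))
    (M : ℝ) (hM : ∀ x ∈ Icc (0:ℝ) 1, ∀ t ∈ Icc (0:ℝ) 1, |G x t| ≤ M)
    (hscc : ∀ t ∈ Icc (0:ℝ) 1, StrictMonoOn (fun x => G x t) (Icc (0:ℝ) 1))
    (hequi : ∀ ε > (0:ℝ), ∃ δ > (0:ℝ), ∀ x ∈ Icc (0:ℝ) 1, ∀ x' ∈ Icc (0:ℝ) 1,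
      |x' - x| < δ → ∀ t ∈ Icc (0:ℝ) 1, |G x' t - G x t| < ε)
    (x p : ℝ → ℝ)
    (hx : ∀ r ∈ Icc (0:ℝ) 1, x r ∈ Icc (0:ℝ) 1)
    (hwsp : ∀ τ ∈ Icc (0:ℝ) 1, ∀ r ∈ Icc (0:ℝ) 1,
      h (x τ) τ - p τ ≥ h (x r) τ - p r)

include hderiv hGmeas hM hscc hequi hx hwsp in
set_option maxHeartbeats 1000000 in
lemma envelope {τ : ℝ} (hτ : τ ∈ Icc (0:ℝ) 1) :
    (h (x τ) τ - p τ) - (h (x 0) 0 - p 0) = ∫ s in (0:ℝ)..τ, G (x s) s := by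
  have h01 : (0:ℝ) ∈ Icc (0:ℝ) 1 := ⟨le_refl _, zero_le_one⟩
  have hxm := x_mono h G hderiv hGmeas M hM hscc x p hx hwsp
  have hM0 : 0 ≤ M := (abs_nonneg _).trans (hM 0 h01 0 h01)
  set U : ℝ → ℝ := fun r => h (x r) r - p r with hU
  -- it suffices to bound the difference by every positive η
  have key : ∀ η > (0:ℝ), |(U τ - U 0) - ∫ s in (0:ℝ)..τ, G (x s) s| ≤ η := by
    intro η hη
    obtain ⟨δe, hδe, hδeq⟩ := hequi (η/2) (by positivity)
    set K : ℝ := 2 * M / δe with hK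
    have hK0 : 0 ≤ K := by positivity
    set N : ℕ := ⌈K / (η / 2)⌉₊ + 1 with hN
    have hN0 : 0 < N := Nat.succ_pos _
    have hNR : (0:ℝ) < N := Nat.cast_pos.2 hN0
    have hKN : K / N ≤ η / 2 := by
      have h1 : K / (η/2) ≤ (N:ℝ) := (Nat.le_ceil _).trans (by rw [hN]; push_cast; linarith)
      have h2 : K ≤ (N:ℝ) * (η/2) := by
        have := mul_le_mul_of_nonneg_right h1 (le_of_lt (by positivity : (0:ℝ) < η/2))
        rwa [div_mul_cancel₀ _ (by positivity : (η/2 : ℝ) ≠ 0)] at this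
      rw [div_le_iff₀ hNR]; linarith
    -- the partition
    set a : ℕ → ℝ := fun k => (k * τ) / N with ha
    have ha0 : a 0 = 0 := by simp [ha]
    have haN : a N = τ := by simp only [ha]; field_simp [hNR.ne']
    have hτ0 : 0 ≤ τ := hτ.1
    have hamono : ∀ {k l : ℕ}, k ≤ l → a k ≤ a l := by
      intro k l hkl
      simp only [ha]
      have : (k:ℝ) ≤ (l:ℝ) := Nat.cast_le.2 hkl
      gcongr
    have hamem : ∀ {k : ℕ}, k ≤ N → a k ∈ Icc (0:ℝ) 1 := by
      intro k hk
      refine ⟨by positivity, ?_⟩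
      calc a k ≤ a N := hamono hk
        _ = τ := haN
        _ ≤ 1 := hτ.2
    have hstep : ∀ k : ℕ, a (k+1) - a k = τ / N := by
      intro k
      simp only [ha]
      push_cast
      field_simp
      ring
    -- integrability of the relevant integrands
    have hintc : ∀ {c : ℝ}, c ∈ Icc (0:ℝ) 1 → ∀ {u v : ℝ}, u ∈ Icc (0:ℝ) 1 → v ∈ Icc (0:ℝ) 1 →
        IntervalIntegrable (fun s => G (x c) s) volume u v := by
      intro c hc u v hu hv
      exact integrable_comp G hGmeas M hM (fun _ => x c) (fun _ _ _ _ _ => le_refl _)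
        (fun _ _ => hx _ hc) hu hv
    have hintx : ∀ {u v : ℝ}, u ∈ Icc (0:ℝ) 1 → v ∈ Icc (0:ℝ) 1 →
        IntervalIntegrable (fun s => G (x s) s) volume u v := fun hu hv =>
      integrable_comp G hGmeas M hM x hxm hx hu hv
    -- telescoping sums
    have hsumU : ∑ k ∈ Finset.range N, (U (a (k+1)) - U (a k)) = U τ - U 0 := by
      rw [Finset.sum_range_sub (fun k => U (a k)), ha0, haN]
    have hsumI : ∑ k ∈ Finset.range N, (∫ s in (a k)..(a (k+1)), G (x s) s)
        = ∫ s in (0:ℝ)..τ, G (x s) s := by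
      rw [← ha0, ← haN]
      exact intervalIntegral.sum_integral_adjacent_intervals
        (fun k hk => hintx (hamem (le_of_lt hk)) (hamem hk))
    set J : ℕ → ℝ := fun k => x (a (k+1)) - x (a k) with hJ
    have hJ0 : ∀ k : ℕ, k < N → 0 ≤ J k := by
      intro k hk
      have := hxm (hamem hk.le) (hamem hk) (hamono (Nat.le_succ k))
      simp only [hJ]; linarith
    set C : ℕ → ℝ := fun k => if J k < δe then η/2 else 2*M with hC
    -- per-piece bound
    have hpiece : ∀ k ∈ Finset.range N,
        |(U (a (k+1)) - U (a k)) - ∫ s in (a k)..(a (k+1)), G (x s) s| ≤ (τ/N) * C k := by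
      intro k hk
      rw [Finset.mem_range] at hk
      have hak : a k ∈ Icc (0:ℝ) 1 := hamem hk.le
      have hak1 : a (k+1) ∈ Icc (0:ℝ) 1 := hamem hk
      have hle : a k ≤ a (k+1) := hamono (Nat.le_succ k)
      have hIccsub : Icc (a k) (a (k+1)) ⊆ Icc (0:ℝ) 1 := Icc_subset_Icc hak.1 hak1.2
      obtain ⟨hL, hR⟩ := sandwich h G hderiv hGmeas M hM x p hx hwsp hak hak1
      have hLM : (∫ s in (a k)..(a (k+1)), G (x (a k)) s)
          ≤ ∫ s in (a k)..(a (k+1)), G (x s) s := by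
        refine intervalIntegral.integral_mono_on hle (hintc hak hak hak1)
          (hintx hak hak1) (fun s hs => ?_)
        exact (hscc s (hIccsub hs)).monotoneOn (hx _ hak) (hx s (hIccsub hs))
          (hxm hak (hIccsub hs) hs.1)
      have hMR : (∫ s in (a k)..(a (k+1)), G (x s) s)
          ≤ ∫ s in (a k)..(a (k+1)), G (x (a (k+1))) s := by
        refine intervalIntegral.integral_mono_on hle (hintx hak hak1)
          (hintc hak1 hak hak1) (fun s hs => ?_)
        exact (hscc s (hIccsub hs)).monotoneOn (hx s (hIccsub hs)) (hx _ hak1)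
          (hxm (hIccsub hs) hak1 hs.2)
      have hRL : (∫ s in (a k)..(a (k+1)), G (x (a (k+1))) s)
            - (∫ s in (a k)..(a (k+1)), G (x (a k)) s) ≤ (τ/N) * C k := by
        rw [← intervalIntegral.integral_sub (hintc hak1 hak hak1) (hintc hak hak hak1)]
        have hbd : ∀ s ∈ uIoc (a k) (a (k+1)), ‖G (x (a (k+1))) s - G (x (a k)) s‖ ≤ C k := by
          intro s hs
          have hsI : s ∈ Icc (0:ℝ) 1 := hIccsub (uIcc_of_le hle ▸ uIoc_subset_uIcc hs)
          rw [Real.norm_eq_abs, hC]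
          by_cases hJk : J k < δe
          · simp only [if_pos hJk]
            refine le_of_lt (hδeq _ (hx _ hak) _ (hx _ hak1) ?_ s hsI)
            rw [abs_of_nonneg (hJ0 k hk)] at *
            exact hJk
          · simp only [if_neg hJk]
            calc |G (x (a (k+1))) s - G (x (a k)) s|
                ≤ |G (x (a (k+1))) s| + |G (x (a k)) s| := abs_sub _ _
              _ ≤ M + M := add_le_add (hM _ (hx _ hak1) s hsI) (hM _ (hx _ hak) s hsI)
              _ = 2*M := by ring
        calc (∫ s in (a k)..(a (k+1)), (G (x (a (k+1))) s - G (x (a k)) s))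
            ≤ ‖∫ s in (a k)..(a (k+1)), (G (x (a (k+1))) s - G (x (a k)) s)‖ :=
              le_abs_self _
          _ ≤ C k * |a (k+1) - a k| :=
              intervalIntegral.norm_integral_le_of_norm_le_const hbd
          _ = (τ/N) * C k := by
              rw [hstep k, abs_of_nonneg (by positivity)]; ring
      rw [abs_sub_le_iff]
      constructor <;> linarith
    -- summing the pieces
    have htotal : |(U τ - U 0) - ∫ s in (0:ℝ)..τ, G (x s) s|
        ≤ ∑ k ∈ Finset.range N, (τ/N) * C k := by
      rw [← hsumU, ← hsumI, ← Finset.sum_sub_distrib]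
      exact (Finset.abs_sum_le_sum_abs _ _).trans (Finset.sum_le_sum hpiece)
    -- counting big jumps
    set S : Finset ℕ := (Finset.range N).filter (fun k => ¬ J k < δe) with hS
    have hcard : (S.card : ℝ) * δe ≤ 1 := by
      have h1 : (S.card : ℝ) * δe = ∑ _k ∈ S, δe := by
        rw [Finset.sum_const]; ring
      have h2 : ∑ k ∈ S, δe ≤ ∑ k ∈ S, J k := by
        refine Finset.sum_le_sum (fun k hk => ?_)
        rw [hS, Finset.mem_filter] at hk
        linarith [not_lt.mp hk.2]
      have h3 : ∑ k ∈ S, J k ≤ ∑ k ∈ Finset.range N, J k := by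
        refine Finset.sum_le_sum_of_subset_of_nonneg (Finset.filter_subset _ _)
          (fun k hk _ => hJ0 k (Finset.mem_range.mp hk))
      have h4 : ∑ k ∈ Finset.range N, J k = x τ - x 0 := by
        simp only [hJ]
        rw [Finset.sum_range_sub (fun k => x (a k)), ha0, haN]
      have h5 : x τ - x 0 ≤ 1 := by
        have := hx τ hτ; have := hx 0 h01
        simp only [mem_Icc] at *
        linarith [this.1]
      linarith
    have hcard' : (S.card : ℝ) ≤ 1/δe := by
      rw [le_div_iff₀ hδe]; exact hcard
    -- final bound
    have hsumC : ∑ k ∈ Finset.range N, (τ/N) * C k ≤ η := by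
      have hsplit : ∑ k ∈ Finset.range N, (τ/N) * C k
          = (∑ k ∈ (Finset.range N).filter (fun k => J k < δe), (τ/N) * C k)
            + ∑ k ∈ S, (τ/N) * C k := by
        rw [hS]
        exact (Finset.sum_filter_add_sum_filter_not _ _ _).symm
      have hb1 : ∑ k ∈ (Finset.range N).filter (fun k => J k < δe), (τ/N) * C k
          ≤ (N:ℝ) * ((τ/N) * (η/2)) := by
        have : ∀ k ∈ (Finset.range N).filter (fun k => J k < δe),
            (τ/N) * C k ≤ (τ/N) * (η/2) := by
          intro k hk
          rw [Finset.mem_filter] at hk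
          simp only [hC, if_pos hk.2]
          exact le_refl _
        calc ∑ k ∈ (Finset.range N).filter (fun k => J k < δe), (τ/N) * C k
            ≤ ∑ _k ∈ (Finset.range N).filter (fun k => J k < δe), (τ/N) * (η/2) :=
              Finset.sum_le_sum this
          _ = ((Finset.range N).filter (fun k => J k < δe)).card * ((τ/N) * (η/2)) := by
              rw [Finset.sum_const]; ring
          _ ≤ (N:ℝ) * ((τ/N) * (η/2)) := by
              have hc : (((Finset.range N).filter (fun k => J k < δe)).card : ℝ) ≤ (N:ℝ) := by
                exact_mod_cast Finset.card_le_card (Finset.filter_subset _ _)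
                  |>.trans (le_of_eq (Finset.card_range N))
              exact mul_le_mul_of_nonneg_right hc (by positivity)
      have hb2 : ∑ k ∈ S, (τ/N) * C k ≤ (1/δe) * ((τ/N) * (2*M)) := by
        have : ∀ k ∈ S, (τ/N) * C k ≤ (τ/N) * (2*M) := by
          intro k hk
          rw [hS, Finset.mem_filter] at hk
          simp only [hC, if_neg hk.2]
          exact le_refl _
        calc ∑ k ∈ S, (τ/N) * C k ≤ ∑ _k ∈ S, (τ/N) * (2*M) := Finset.sum_le_sum this
          _ = (S.card : ℝ) * ((τ/N) * (2*M)) := by rw [Finset.sum_const]; ring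
          _ ≤ (1/δe) * ((τ/N) * (2*M)) :=
              mul_le_mul_of_nonneg_right hcard' (by positivity)
      have hτ1 : τ ≤ 1 := hτ.2
      have e1 : (N:ℝ) * ((τ/N) * (η/2)) = τ * (η/2) := by field_simp
      have e2 : (1/δe) * ((τ/N) * (2*M)) = τ * (K/N) := by rw [hK]; field_simp
      have e3 : τ * (η/2) ≤ η/2 := by nlinarith
      have e4 : τ * (K/N) ≤ K/N := by
        have : 0 ≤ K/N := by positivity
        nlinarith
      linarith
    exact htotal.trans hsumC
  -- conclude equality
  by_contra hne
  have hne' : (U τ - U 0) - (∫ s in (0:ℝ)..τ, G (x s) s) ≠ 0 := by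
    intro hz; apply hne; simp only [hU] at hz ⊢; linarith
  have hpos := abs_pos.2 hne'
  have := key (|(U τ - U 0) - ∫ s in (0:ℝ)..τ, G (x s) s| / 2) (by linarith)
  linarith

end WSP2

end SEFF

namespace SEFF

set_option maxHeartbeats 1000000 in
lemma single_agent (h G : ℝ → ℝ → ℝ)
    (hderiv : ∀ x ∈ Icc (0:ℝ) 1, ∀ t ∈ Icc (0:ℝ) 1,
      HasDerivWithinAt (fun s => h x s) (G x t) (Icc (0:ℝ) 1) t)
    (hGmeas : Measurable (fun p : Icc (0:ℝ) 1 × Icc (0:ℝ) 1 => G p.1 p.2))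
    (M : ℝ) (hM : ∀ x ∈ Icc (0:ℝ) 1, ∀ t ∈ Icc (0:ℝ) 1, |G x t| ≤ M)
    (hscc : ∀ t ∈ Icc (0:ℝ) 1, StrictMonoOn (fun x => G x t) (Icc (0:ℝ) 1))
    (hequi : ∀ ε > (0:ℝ), ∃ δ > (0:ℝ), ∀ x ∈ Icc (0:ℝ) 1, ∀ x' ∈ Icc (0:ℝ) 1,
      |x' - x| < δ → ∀ t ∈ Icc (0:ℝ) 1, |G x' t - G x t| < ε)
    (x p : ℝ → ℝ)
    (hx : ∀ r ∈ Icc (0:ℝ) 1, x r ∈ Icc (0:ℝ) 1)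
    (hwsp : ∀ τ ∈ Icc (0:ℝ) 1, ∀ r ∈ Icc (0:ℝ) 1,
      h (x τ) τ - p τ ≥ h (x r) τ - p r)
    (e : ℝ → ℝ) (hes : StrictMonoOn e (Icc (0:ℝ) 1))
    (hem : ∀ r ∈ Icc (0:ℝ) 1, e r ∈ Icc (0:ℝ) 1)
    (θ : ℝ) (hθ0 : 0 < θ) (hθ1 : θ ≤ 1)
    (ε₂ : ℝ) (hε₂ : 0 ≤ ε₂)
    (hsmallG : ∀ a ∈ Icc (0:ℝ) 1, ∀ b ∈ Icc (0:ℝ) 1, |b - a| ≤ θ →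
      ∀ s ∈ Icc (0:ℝ) 1, |G b s - G a s| ≤ ε₂)
    (hsmallh : ∀ a ∈ Icc (0:ℝ) 1, ∀ b ∈ Icc (0:ℝ) 1, |b - a| ≤ θ → |h b 0 - h a 0| ≤ ε₂)
    (xθ pθ : ℝ → ℝ)
    (hxθ : ∀ r, xθ r = (1-θ) * x r + θ * e r)
    (hpθ : ∀ r, pθ r = h (xθ r) r - (∫ s in (0:ℝ)..r, G (xθ s) s) - (h (x 0) 0 - p 0)) :
    (∀ τ ∈ Icc (0:ℝ) 1, ∀ r ∈ Icc (0:ℝ) 1, r ≠ τ →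
      h (xθ τ) τ - pθ τ > h (xθ r) τ - pθ r) ∧
    (∀ r ∈ Icc (0:ℝ) 1, |pθ r - p r| ≤ 3 * ε₂) := by
  have h01 : (0:ℝ) ∈ Icc (0:ℝ) 1 := ⟨le_refl _, zero_le_one⟩
  have hxm := x_mono h G hderiv hGmeas M hM hscc x p hx hwsp
  have hxθmem : ∀ r ∈ Icc (0:ℝ) 1, xθ r ∈ Icc (0:ℝ) 1 := by
    intro r hr
    have h1 := hx r hr; have h2 := hem r hr
    rw [mem_Icc] at *
    constructor
    · rw [hxθ]; nlinarith [h1.1, h2.1]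
    · rw [hxθ]; nlinarith [h1.2, h2.2]
  have hxθmono : MonotoneOn xθ (Icc (0:ℝ) 1) := by
    intro u hu v hv huv
    have := hxm hu hv huv
    have := hes.monotoneOn hu hv huv
    rw [hxθ, hxθ]
    nlinarith
  have hxθstrict : StrictMonoOn xθ (Icc (0:ℝ) 1) := by
    intro u hu v hv huv
    have h1 := hxm hu hv huv.le
    have h2 := hes hu hv huv
    rw [hxθ, hxθ]
    nlinarith
  have hclose : ∀ r ∈ Icc (0:ℝ) 1, |xθ r - x r| ≤ θ := by
    intro r hr
    have h1 := hx r hr; have h2 := hem r hr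
    rw [mem_Icc] at h1 h2
    rw [hxθ, abs_le]
    constructor <;> nlinarith
  have hintxθ : ∀ {u v : ℝ}, u ∈ Icc (0:ℝ) 1 → v ∈ Icc (0:ℝ) 1 →
      IntervalIntegrable (fun s => G (xθ s) s) volume u v := fun hu hv =>
    integrable_comp G hGmeas M hM xθ hxθmono hxθmem hu hv
  have hintc : ∀ {c : ℝ}, c ∈ Icc (0:ℝ) 1 → ∀ {u v : ℝ}, u ∈ Icc (0:ℝ) 1 → v ∈ Icc (0:ℝ) 1 →
      IntervalIntegrable (fun s => G c s) volume u v := by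
    intro c hc u v hu hv
    exact integrable_comp G hGmeas M hM (fun _ => c) (fun _ _ _ _ _ => le_refl _)
      (fun _ _ => hc) hu hv
  constructor
  · -- strict strategy-proofness
    intro τ hτ r hr hne
    have hdiff : (h (xθ τ) τ - pθ τ) - (h (xθ r) τ - pθ r)
        = ∫ s in r..τ, (G (xθ s) s - G (xθ r) s) := by
      rw [hpθ, hpθ]
      have hadj : (∫ s in (0:ℝ)..r, G (xθ s) s) + (∫ s in r..τ, G (xθ s) s)
          = ∫ s in (0:ℝ)..τ, G (xθ s) s :=
        intervalIntegral.integral_add_adjacent_intervals (hintxθ h01 hr) (hintxθ hr hτ)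
      have hftc : ∫ s in r..τ, G (xθ r) s = h (xθ r) τ - h (xθ r) r :=
        ftc h G hderiv hGmeas M hM (hxθmem r hr) hr hτ
      rw [intervalIntegral.integral_sub (hintxθ hr hτ) (hintc (hxθmem r hr) hr hτ), hftc]
      linarith
    have hpos : 0 < ∫ s in r..τ, (G (xθ s) s - G (xθ r) s) := by
      rcases lt_or_gt_of_ne hne with hlt | hgt
      · refine intervalIntegral.intervalIntegral_pos_of_pos_on
          (((hintxθ hr hτ)).sub (hintc (hxθmem r hr) hr hτ)) (fun s hs => ?_) hlt
        have hsI : s ∈ Icc (0:ℝ) 1 := ⟨le_trans hr.1 hs.1.le, le_trans hs.2.le hτ.2⟩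
        have := hxθstrict hr hsI hs.1
        have := hscc s hsI (hxθmem r hr) (hxθmem s hsI) this
        simpa using sub_pos.2 this
      · rw [intervalIntegral.integral_symm]
        have : 0 < ∫ s in τ..r, (G (xθ r) s - G (xθ s) s) := by
          refine intervalIntegral.intervalIntegral_pos_of_pos_on
            ((hintc (hxθmem r hr) hτ hr).sub (hintxθ hτ hr)) (fun s hs => ?_) hgt
          have hsI : s ∈ Icc (0:ℝ) 1 := ⟨le_trans hτ.1 hs.1.le, le_trans hs.2.le hr.2⟩
          have := hxθstrict hsI hr hs.2
          have := hscc s hsI (hxθmem s hsI) (hxθmem r hr) this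
          simpa using sub_pos.2 this
        have heq : (∫ s in τ..r, (G (xθ s) s - G (xθ r) s))
            = - ∫ s in τ..r, (G (xθ r) s - G (xθ s) s) := by
          rw [← intervalIntegral.integral_neg]
          congr 1
          funext s
          ring
        rw [heq]
        linarith
    linarith [hdiff ▸ hpos]
  · -- closeness of payments
    intro r hr
    have henv := envelope h G hderiv hGmeas M hM hscc hequi x p hx hwsp hr
    have hterm1 : |h (xθ r) r - h (x r) r| ≤ 2 * ε₂ := by
      have hf1 : ∫ s in (0:ℝ)..r, G (xθ r) s = h (xθ r) r - h (xθ r) 0 :=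
        ftc h G hderiv hGmeas M hM (hxθmem r hr) h01 hr
      have hf2 : ∫ s in (0:ℝ)..r, G (x r) s = h (x r) r - h (x r) 0 :=
        ftc h G hderiv hGmeas M hM (hx r hr) h01 hr
      have hib : |(∫ s in (0:ℝ)..r, G (xθ r) s) - ∫ s in (0:ℝ)..r, G (x r) s| ≤ ε₂ := by
        rw [← intervalIntegral.integral_sub (hintc (hxθmem r hr) h01 hr)
          (hintc (hx r hr) h01 hr)]
        have hsub : uIoc (0:ℝ) r ⊆ Icc (0:ℝ) 1 := by
          rw [uIoc_of_le hr.1]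
          exact Ioc_subset_Icc_self.trans (Icc_subset_Icc le_rfl hr.2)
        have hbd : ∀ s ∈ uIoc (0:ℝ) r, ‖G (xθ r) s - G (x r) s‖ ≤ ε₂ := by
          intro s hs
          rw [Real.norm_eq_abs]
          exact hsmallG _ (hx r hr) _ (hxθmem r hr) (hclose r hr) s (hsub hs)
        calc |∫ s in (0:ℝ)..r, (G (xθ r) s - G (x r) s)|
            ≤ ε₂ * |r - 0| := intervalIntegral.norm_integral_le_of_norm_le_const hbd
          _ ≤ ε₂ * 1 := by
              apply mul_le_mul_of_nonneg_left _ hε₂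
              rw [sub_zero, abs_of_nonneg hr.1]; exact hr.2
          _ = ε₂ := mul_one _
      have hh0 : |h (xθ r) 0 - h (x r) 0| ≤ ε₂ :=
        hsmallh _ (hx r hr) _ (hxθmem r hr) (hclose r hr)
      have : h (xθ r) r - h (x r) r
          = (h (xθ r) 0 - h (x r) 0)
            + ((∫ s in (0:ℝ)..r, G (xθ r) s) - ∫ s in (0:ℝ)..r, G (x r) s) := by
        rw [hf1, hf2]; ring
      rw [this]
      calc |(h (xθ r) 0 - h (x r) 0)
            + ((∫ s in (0:ℝ)..r, G (xθ r) s) - ∫ s in (0:ℝ)..r, G (x r) s)|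
          ≤ |h (xθ r) 0 - h (x r) 0|
            + |(∫ s in (0:ℝ)..r, G (xθ r) s) - ∫ s in (0:ℝ)..r, G (x r) s| := abs_add_le _ _
        _ ≤ ε₂ + ε₂ := add_le_add hh0 hib
        _ = 2 * ε₂ := by ring
    have hterm2 : |(∫ s in (0:ℝ)..r, G (xθ s) s) - ∫ s in (0:ℝ)..r, G (x s) s| ≤ ε₂ := by
      rw [← intervalIntegral.integral_sub (hintxθ h01 hr)
        (integrable_comp G hGmeas M hM x hxm hx h01 hr)]
      have hsub : uIoc (0:ℝ) r ⊆ Icc (0:ℝ) 1 := by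
        rw [uIoc_of_le hr.1]
        exact Ioc_subset_Icc_self.trans (Icc_subset_Icc le_rfl hr.2)
      have hbd : ∀ s ∈ uIoc (0:ℝ) r, ‖G (xθ s) s - G (x s) s‖ ≤ ε₂ := by
        intro s hs
        have hsI : s ∈ Icc (0:ℝ) 1 := hsub hs
        rw [Real.norm_eq_abs]
        exact hsmallG _ (hx s hsI) _ (hxθmem s hsI) (hclose s hsI) s hsI
      calc |∫ s in (0:ℝ)..r, (G (xθ s) s - G (x s) s)|
          ≤ ε₂ * |r - 0| := intervalIntegral.norm_integral_le_of_norm_le_const hbd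
        _ ≤ ε₂ * 1 := by
            apply mul_le_mul_of_nonneg_left _ hε₂
            rw [sub_zero, abs_of_nonneg hr.1]; exact hr.2
        _ = ε₂ := mul_one _
    have hexp : pθ r - p r = (h (xθ r) r - h (x r) r)
        - ((∫ s in (0:ℝ)..r, G (xθ s) s) - ∫ s in (0:ℝ)..r, G (x s) s) := by
      rw [hpθ]
      have : p r = h (x r) r - ((h (x r) r - p r) - (h (x 0) 0 - p 0)) - (h (x 0) 0 - p 0) := by
        ring
      rw [this, henv]
      ring
    rw [hexp]
    calc |(h (xθ r) r - h (x r) r)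
          - ((∫ s in (0:ℝ)..r, G (xθ s) s) - ∫ s in (0:ℝ)..r, G (x s) s)|
        ≤ |h (xθ r) r - h (x r) r|
          + |(∫ s in (0:ℝ)..r, G (xθ s) s) - ∫ s in (0:ℝ)..r, G (x s) s| := abs_sub _ _
      _ ≤ 2 * ε₂ + ε₂ := add_le_add hterm1 hterm2
      _ = 3 * ε₂ := by ring

end SEFF

/-- Corollary 1: a principal with an objective `Π` continuous with respect to uniform
closeness of mechanisms can achieve strict strategy-proofness at an arbitrarily small
cost relative to any feasible, weakly strategy-proof mechanism. -/
theorem strictness_essentially_for_free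
    (n : ℕ) (hn : 1 ≤ n)
    (g g2 : Fin n → ℝ → ℝ → ℝ)
    (hderiv : ∀ i, ∀ x ∈ Icc (0:ℝ) 1, ∀ t ∈ Icc (0:ℝ) 1,
      HasDerivWithinAt (fun s => g i x s) (g2 i x t) (Icc (0:ℝ) 1) t)
    (hbdd : ∀ i, ∃ M : ℝ, ∀ x ∈ Icc (0:ℝ) 1, ∀ t ∈ Icc (0:ℝ) 1, |g2 i x t| ≤ M)
    (hmeas : ∀ i, Measurable (fun p : Icc (0:ℝ) 1 × Icc (0:ℝ) 1 => g2 i p.1 p.2))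
    (hscc : ∀ i, ∀ t ∈ Icc (0:ℝ) 1, StrictMonoOn (fun x => g2 i x t) (Icc (0:ℝ) 1))
    (hgcont : ∀ i, ∀ t ∈ Icc (0:ℝ) 1, ContinuousOn (fun x => g i x t) (Icc (0:ℝ) 1))
    (hequi : ∀ i, ∀ ε > (0:ℝ), ∃ δ > (0:ℝ), ∀ x ∈ Icc (0:ℝ) 1, ∀ x' ∈ Icc (0:ℝ) 1,
      |x' - x| < δ → ∀ t ∈ Icc (0:ℝ) 1, |g2 i x' t - g2 i x t| < ε)
    -- the principal's objective, continuous w.r.t. uniform closeness of mechanisms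
    (Obj : (Fin n → (Fin n → ℝ) → ℝ) × (Fin n → (Fin n → ℝ) → ℝ) → ℝ)
    (hObj : ∀ ε > (0:ℝ), ∃ δ > (0:ℝ),
      ∀ X P X' P' : Fin n → (Fin n → ℝ) → ℝ,
        (∀ i, ∀ t : Fin n → ℝ, (∀ j, t j ∈ Icc (0:ℝ) 1) →
          |X' i t - X i t| ≤ δ ∧ |P' i t - P i t| ≤ δ) →
        |Obj (X', P') - Obj (X, P)| < ε)
    (X P : Fin n → (Fin n → ℝ) → ℝ)
    (hX : ∀ i t, (∀ j, t j ∈ Icc (0:ℝ) 1) → X i t ∈ Icc (0:ℝ) 1)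
    -- feasibility of (X, P)
    (hfeas : ∀ t : Fin n → ℝ, (∀ j, t j ∈ Icc (0:ℝ) 1) → ∑ i, X i t ≤ 1)
    -- weak strategy-proofness of (X, P)
    (hwsp : ∀ i, ∀ t : Fin n → ℝ, (∀ j, t j ∈ Icc (0:ℝ) 1) → ∀ r ∈ Icc (0:ℝ) 1,
      g i (X i t) (t i) - P i t
        ≥ g i (X i (Function.update t i r)) (t i) - P i (Function.update t i r)) :
    ∀ ε > (0:ℝ), ∃ X' P' : Fin n → (Fin n → ℝ) → ℝ,
      (∀ i t, (∀ j, t j ∈ Icc (0:ℝ) 1) → X' i t ∈ Icc (0:ℝ) 1) ∧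
      (∀ t : Fin n → ℝ, (∀ j, t j ∈ Icc (0:ℝ) 1) → ∑ i, X' i t ≤ 1) ∧
      (∀ i, ∀ t : Fin n → ℝ, (∀ j, t j ∈ Icc (0:ℝ) 1) → ∀ r ∈ Icc (0:ℝ) 1, r ≠ t i →
        g i (X' i t) (t i) - P' i t
          > g i (X' i (Function.update t i r)) (t i) - P' i (Function.update t i r)) ∧
      Obj (X', P') ≥ Obj (X, P) - ε := by
  intro ε hε
  obtain ⟨δObj, hδObjpos, hObjc⟩ := hObj ε hε
  have h01 : (0:ℝ) ∈ Icc (0:ℝ) 1 := ⟨le_refl _, zero_le_one⟩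
  have hn1 : (1:ℝ) ≤ (n:ℝ) := by exact_mod_cast hn
  have hnpos : (0:ℝ) < (n:ℝ) := by linarith
  set ε₂ : ℝ := δObj / 3 with hε₂def
  have hε₂pos : 0 < ε₂ := by positivity
  -- choose a modulus for each agent
  have hδsel : ∀ i : Fin n, ∃ δ : ℝ, 0 < δ ∧ ∀ a ∈ Icc (0:ℝ) 1, ∀ b ∈ Icc (0:ℝ) 1,
      |b - a| ≤ δ → (∀ s ∈ Icc (0:ℝ) 1, |g2 i b s - g2 i a s| ≤ ε₂)
        ∧ |g i b 0 - g i a 0| ≤ ε₂ := by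
    intro i
    obtain ⟨δ1, hδ1, h1⟩ := hequi i ε₂ hε₂pos
    have huc := isCompact_Icc.uniformContinuousOn_of_continuous (hgcont i 0 h01)
    rw [Metric.uniformContinuousOn_iff] at huc
    obtain ⟨δ2, hδ2, h2⟩ := huc ε₂ hε₂pos
    refine ⟨min δ1 δ2 / 2, by positivity, ?_⟩
    intro a ha b hb hab
    have hmin1 : min δ1 δ2 / 2 < δ1 := by
      rcases min_le_iff.mpr (Or.inl (le_refl δ1)) with hm
      have : 0 < min δ1 δ2 := lt_min hδ1 hδ2
      linarith
    have hmin2 : min δ1 δ2 / 2 < δ2 := by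
      rcases min_le_iff.mpr (Or.inr (le_refl δ2)) with hm
      have : 0 < min δ1 δ2 := lt_min hδ1 hδ2
      linarith
    constructor
    · intro s hs
      exact (h1 a ha b hb (lt_of_le_of_lt hab hmin1) s hs).le
    · have := h2 b hb a ha (by rw [Real.dist_eq]; exact lt_of_le_of_lt hab hmin2)
      rw [Real.dist_eq] at this
      exact this.le
  choose δf hδfpos hδfprop using hδsel
  have hneF : (Finset.univ : Finset (Fin n)).Nonempty := ⟨⟨0, hn⟩, Finset.mem_univ _⟩
  set δmin : ℝ := Finset.univ.inf' hneF δf with hδmin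
  have hδminpos : 0 < δmin := by
    rw [hδmin, Finset.lt_inf'_iff]
    exact fun i _ => hδfpos i
  set θ : ℝ := min 1 (min δObj δmin) / 2 with hθdef
  have hθpos : 0 < θ := by
    rw [hθdef]
    have : 0 < min 1 (min δObj δmin) := lt_min one_pos (lt_min hδObjpos hδminpos)
    linarith
  have hθ1 : θ ≤ 1 := by
    rw [hθdef]
    have := min_le_left 1 (min δObj δmin)
    linarith
  have hθObj : θ ≤ δObj := by
    rw [hθdef]
    have h1 := min_le_right 1 (min δObj δmin)
    have h2 := min_le_left δObj δmin
    linarith [hδObjpos]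
  have hθδf : ∀ i, θ ≤ δf i := by
    intro i
    have h1 := min_le_right 1 (min δObj δmin)
    have h2 := min_le_right δObj δmin
    have h3 : δmin ≤ δf i := Finset.inf'_le δf (Finset.mem_univ i)
    rw [hθdef]
    linarith [hδfpos i]
  -- the perturbed mechanism
  set X' : Fin n → (Fin n → ℝ) → ℝ := fun i t => (1-θ) * X i t + θ * (t i / n) with hX'def
  set P' : Fin n → (Fin n → ℝ) → ℝ := fun i t =>
    g i (X' i t) (t i)
      - (∫ s in (0:ℝ)..(t i),
          g2 i ((1-θ) * X i (Function.update t i s) + θ * (s / n)) s)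
      - (g i (X i (Function.update t i 0)) 0 - P i (Function.update t i 0)) with hP'def
  -- key per-agent, per-profile facts
  have hkey : ∀ i, ∀ t : Fin n → ℝ, (∀ j, t j ∈ Icc (0:ℝ) 1) →
      (∀ r ∈ Icc (0:ℝ) 1, r ≠ t i →
        g i (X' i t) (t i) - P' i t
          > g i (X' i (Function.update t i r)) (t i) - P' i (Function.update t i r)) ∧
      (|X' i t - X i t| ≤ δObj ∧ |P' i t - P i t| ≤ δObj) := by
    intro i t ht
    obtain ⟨M, hM⟩ := hbdd i
    set x : ℝ → ℝ := fun r => X i (Function.update t i r) with hxdef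
    set p : ℝ → ℝ := fun r => P i (Function.update t i r) with hpdef
    set e : ℝ → ℝ := fun r => r / n with hedef
    set xθ : ℝ → ℝ := fun r => (1-θ) * x r + θ * e r with hxθdef
    set pθ : ℝ → ℝ := fun r =>
      g i (xθ r) r - (∫ s in (0:ℝ)..r, g2 i (xθ s) s) - (g i (x 0) 0 - p 0) with hpθdef
    have hcube : ∀ r ∈ Icc (0:ℝ) 1, ∀ j, Function.update t i r j ∈ Icc (0:ℝ) 1 := by
      intro r hr j
      rcases eq_or_ne j i with rfl | hj
      · rw [Function.update_self]; exact hr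
      · rw [Function.update_of_ne hj]; exact ht j
    have hxmem : ∀ r ∈ Icc (0:ℝ) 1, x r ∈ Icc (0:ℝ) 1 := fun r hr => hX i _ (hcube r hr)
    have hwsp' : ∀ τ ∈ Icc (0:ℝ) 1, ∀ r ∈ Icc (0:ℝ) 1,
        g i (x τ) τ - p τ ≥ g i (x r) τ - p r := by
      intro τ hτ r hr
      have := hwsp i (Function.update t i τ) (hcube τ hτ) r hr
      simpa [hxdef, hpdef, Function.update_idem, Function.update_self] using this
    have hes : StrictMonoOn e (Icc (0:ℝ) 1) := by
      intro u _ v _ huv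
      simp only [hedef]
      gcongr
    have hem : ∀ r ∈ Icc (0:ℝ) 1, e r ∈ Icc (0:ℝ) 1 := by
      intro r hr
      simp only [hedef]
      exact ⟨div_nonneg hr.1 hnpos.le, (div_le_one hnpos).2 (hr.2.trans hn1)⟩
    have hsG : ∀ a ∈ Icc (0:ℝ) 1, ∀ b ∈ Icc (0:ℝ) 1, |b - a| ≤ θ →
        ∀ s ∈ Icc (0:ℝ) 1, |g2 i b s - g2 i a s| ≤ ε₂ := fun a ha b hb hab =>
      (hδfprop i a ha b hb (hab.trans (hθδf i))).1
    have hsh : ∀ a ∈ Icc (0:ℝ) 1, ∀ b ∈ Icc (0:ℝ) 1, |b - a| ≤ θ →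
        |g i b 0 - g i a 0| ≤ ε₂ := fun a ha b hb hab =>
      (hδfprop i a ha b hb (hab.trans (hθδf i))).2
    obtain ⟨hstrict, hclosep⟩ := SEFF.single_agent (g i) (g2 i) (hderiv i) (hmeas i)
      M hM (hscc i) (hequi i) x p hxmem hwsp' e hes hem θ hθpos hθ1 ε₂ hε₂pos.le
      hsG hsh xθ pθ (fun _ => rfl) (fun _ => rfl)
    -- connecting equations
    have hXeq : ∀ r, X' i (Function.update t i r) = xθ r := by
      intro r
      simp only [hX'def, hxθdef, hxdef, hedef, Function.update_self]
    have hPeq : ∀ r, P' i (Function.update t i r) = pθ r := by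
      intro r
      simp only [hP'def, hpθdef, hxθdef, hxdef, hpdef, hedef, hX'def,
        Function.update_self, Function.update_idem]
    have hteq : Function.update t i (t i) = t := Function.update_eq_self i t
    have hXt : X' i t = xθ (t i) := by have := hXeq (t i); rwa [hteq] at this
    have hPt : P' i t = pθ (t i) := by have := hPeq (t i); rwa [hteq] at this
    refine ⟨?_, ?_, ?_⟩
    · -- strictness
      intro r hr hrne
      have := hstrict (t i) (ht i) r hr hrne
      rw [hXt, hPt, hXeq r, hPeq r]
      exact this
    · -- closeness of allocations
      have h1 := hX i t ht
      have h2 : t i / n ∈ Icc (0:ℝ) 1 := hem (t i) (ht i)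
      rw [mem_Icc] at h1 h2
      have : X' i t - X i t = θ * (t i / n) - θ * X i t := by
        rw [hX'def]; ring
      rw [this, abs_le]
      constructor <;> nlinarith
    · -- closeness of payments
      have := hclosep (t i) (ht i)
      have hpt : p (t i) = P i t := by rw [hpdef]; simp [hteq]
      rw [hPt, ← hpt]
      calc |pθ (t i) - p (t i)| ≤ 3 * ε₂ := this
        _ = δObj := by rw [hε₂def]; ring
  -- assemble the answer
  refine ⟨X', P', ?_, ?_, ?_, ?_⟩
  · intro i t ht
    have h1 := hX i t ht
    have h2 : t i / n ∈ Icc (0:ℝ) 1 :=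
      ⟨div_nonneg (ht i).1 hnpos.le, (div_le_one hnpos).2 ((ht i).2.trans hn1)⟩
    rw [mem_Icc] at h1 h2
    rw [hX'def, mem_Icc]
    constructor <;> nlinarith
  · intro t ht
    have hsum : ∑ i, X' i t = (1-θ) * (∑ i, X i t) + (θ/n) * ∑ i, t i := by
      rw [Finset.mul_sum, Finset.mul_sum, ← Finset.sum_add_distrib]
      refine Finset.sum_congr rfl (fun i _ => ?_)
      rw [hX'def]
      ring
    have hsumt : ∑ i, t i ≤ (n:ℝ) := by
      calc ∑ i, t i ≤ ∑ _i : Fin n, (1:ℝ) := Finset.sum_le_sum (fun i _ => (ht i).2)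
        _ = n := by simp
    have hfx := hfeas t ht
    have hsumt0 : 0 ≤ ∑ i, t i := Finset.sum_nonneg (fun i _ => (ht i).1)
    rw [hsum]
    have e1 : (θ/n) * (∑ i, t i) ≤ (θ/n) * n :=
      mul_le_mul_of_nonneg_left hsumt (by positivity)
    have e2 : (θ/n) * (n:ℝ) = θ := by field_simp
    nlinarith [hfx, hθ1, hθpos]
  · intro i t ht r hr hrne
    exact (hkey i t ht).1 r hr hrne
  · have hcl : ∀ i, ∀ t : Fin n → ℝ, (∀ j, t j ∈ Icc (0:ℝ) 1) →
        |X' i t - X i t| ≤ δObj ∧ |P' i t - P i t| ≤ δObj :=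
      fun i t ht => (hkey i t ht).2
    have := hObjc X P X' P' hcl
    have := abs_lt.mp this
    linarith
end
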